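/- arXiv:2209.04740 — 6 statements merged into one kernel-verified Lean document; each statement's English description precedes it below -/
import Mathlib

section
/- Let Z_3 ⊆ {0,1}^2 be the configuration consisting of two adjacent vertices of Q_2, e.g. Z_3 = {(0,0),(0,1)}. Then the 2-cube density of Z_3 satisfies λ(Z_3,2) = 1/2. -/
open Filter

namespace CubeDensity

/-- The automorphism of `Q_d` given by permuting coordinates by `σ` and then
complementing the values in the coordinates where `ε` is `true`. -/
def autMap (d : ℕ) (σ : Equiv.Perm (Fin d)) (ε : Fin d → Bool) (v : Fin d → Bool) :
    Fin d → Bool :=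
  fun i => xor (v (σ⁻¹ i)) (ε i)

/-- `K` is an exact copy of `H` in `Q_d`: some automorphism of `Q_d` maps `H` onto `K`. -/
def ExactCopy (d : ℕ) (H K : Set (Fin d → Bool)) : Prop :=
  ∃ σ : Equiv.Perm (Fin d), ∃ ε : Fin d → Bool, autMap d σ ε '' H = K

/-- The vertex of `Q_n` in the sub-`d`-cube with flip coordinates `F` (and fixed values `g`
outside `F`) corresponding to the vertex `u` of `Q_d`, identifying the flip coordinates
with `Fin d` in increasing order. -/
def embed {n d : ℕ} (F : Finset (Fin n)) (hF : F.card = d) (g : Fin n → Bool)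
    (u : Fin d → Bool) : Fin n → Bool :=
  fun i => if h : i ∈ F then u ((F.orderIsoOfFin hF).symm ⟨i, h⟩) else g i

/-- The sub-`d`-cube of `Q_n` with flip coordinates `F` and fixed values `g` outside `F`
is `H`-good for `S`: the configuration induced by `S` on it is an exact copy of `H`. -/
def IsGood {n d : ℕ} (H : Set (Fin d → Bool)) (S : Set (Fin n → Bool))
    (F : Finset (Fin n)) (hF : F.card = d) (g : Fin n → Bool) : Prop :=
  ExactCopy d H {u : Fin d → Bool | embed F hF g u ∈ S}

/-- The number of `H`-good sub-`d`-cubes of `Q_n`, where a sub-`d`-cube is encoded as a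
pair `(F, g)` with `F` the `d`-element set of flip coordinates and `g` the fixed values
outside `F` (normalized to be `false` on `F`). -/
noncomputable def goodCount (d : ℕ) (H : Set (Fin d → Bool)) (n : ℕ)
    (S : Set (Fin n → Bool)) : ℕ :=
  Nat.card {p : Finset (Fin n) × (Fin n → Bool) //
    ∃ hF : p.1.card = d, (∀ i ∈ p.1, p.2 i = false) ∧ IsGood H S p.1 hF p.2}

/-- `g(H,d,n,S)`: the fraction of the `C(n,d) * 2^(n-d)` sub-`d`-cubes of `Q_n` that are
`H`-good for `S`. -/
noncomputable def gFrac (d : ℕ) (H : Set (Fin d → Bool)) (n : ℕ)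
    (S : Set (Fin n → Bool)) : ℝ :=
  (goodCount d H n S : ℝ) / ((n.choose d : ℝ) * 2 ^ (n - d))

/-- `ex(H,d,n)`: the maximum over all `S ⊆ {0,1}^n` of the fraction of `H`-good
sub-`d`-cubes. -/
noncomputable def exD (d : ℕ) (H : Set (Fin d → Bool)) (n : ℕ) : ℝ :=
  ⨆ S : Set (Fin n → Bool), gFrac d H n S

/-!
A `Z₃`-good square (sub-`2`-cube) contains exactly one endpoint of each of its two diagonals:
`Z₃` meets every antipodal pair of `Q₂` once, and automorphisms of `Q₂` commute with the antipode.
So each good square with flip coordinates `i < j` gives, at each of its four vertices `x`, a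
triple `(x, i, j)` with exactly one of `x`, `x + eᵢ + eⱼ` in `S`. Substituting `x ↦ x + eᵢ`,
the triples with a given `x` are the pairs `i < j` separated by `k ↦ [x + e_k ∈ S]`, at most
`n² / 4` of them; this bounds the good fraction by `n / (2(n - 1))`.

Conversely, if `S` is the set of points of even parity on the first `⌊n/2⌋` coordinates, every
square with one flip coordinate in each half is good, and these are at least half of all squares.
-/

open Finset Function
open scoped Classical

def antipode {d : ℕ} (v : Fin d → Bool) : Fin d → Bool := fun i => !v i

lemma autMap_injective {d : ℕ} (σ : Equiv.Perm (Fin d)) (ε : Fin d → Bool) :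
    Injective (autMap d σ ε) := by
  intro v w h
  funext k
  simpa [autMap] using congrFun h (σ k)

lemma autMap_antipode {d : ℕ} (σ : Equiv.Perm (Fin d)) (ε : Fin d → Bool) (v : Fin d → Bool) :
    autMap d σ ε (antipode v) = antipode (autMap d σ ε v) := by
  funext i
  simp [autMap, antipode]

lemma ExactCopy.image_antipode {d : ℕ} {H K : Set (Fin d → Bool)} (hK : ExactCopy d H K)
    (hH : antipode '' H = Hᶜ) : antipode '' K = Kᶜ := by
  obtain ⟨σ, ε, rfl⟩ := hK
  have hbij : Bijective (autMap d σ ε) := (autMap_injective σ ε).bijective_of_finite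
  rw [Set.image_image, ← Set.image_compl_eq hbij, ← hH, Set.image_image]
  simp only [autMap_antipode]

lemma image_antipode_setOf_apply_eq_false {d : ℕ} (k : Fin d) :
    antipode '' {v : Fin d → Bool | v k = false} = {v | v k = false}ᶜ := by
  ext w
  constructor
  · rintro ⟨v, hv, rfl⟩
    simp_all [antipode]
  · intro hw
    exact ⟨antipode w, by simpa [antipode] using hw, by funext; simp [antipode]⟩

lemma exactCopy_setOf_apply_eq {d : ℕ} (k : Fin d) (c : Bool) :
    ExactCopy d {v | v k = false} {v | v k = c} := by
  refine ⟨1, fun _ => c, Set.ext fun w => ⟨?_, fun hw => ?_⟩⟩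
  · rintro ⟨v, hv, rfl⟩
    simp_all [autMap]
  · exact ⟨fun i => xor (w i) c, by simpa using hw, by funext; simp [autMap]⟩

variable {n : ℕ}

def flipAt (i : Fin n) (x : Fin n → Bool) : Fin n → Bool :=
  update x i (!x i)

lemma flipAt_involutive (i : Fin n) : Involutive (flipAt i) := by
  intro x
  simp [flipAt]

lemma flipAt_comm {i j : Fin n} (h : i ≠ j) (x : Fin n → Bool) :
    flipAt i (flipAt j x) = flipAt j (flipAt i x) := by
  simp [flipAt, update_of_ne h, update_of_ne h.symm, update_comm h]

def squareVertex (i j : Fin n) (x : Fin n → Bool) (u : Fin 2 → Bool) : Fin n → Bool :=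
  update (update x i (u 0)) j (u 1)

lemma squareVertex_flipAt_left (i j : Fin n) (x : Fin n → Bool) :
    squareVertex i j (flipAt i x) = squareVertex i j x := by
  funext u
  simp [squareVertex, flipAt]

lemma squareVertex_flipAt_right {i j : Fin n} (h : i ≠ j) (x : Fin n → Bool) :
    squareVertex i j (flipAt j x) = squareVertex i j x := by
  funext u
  simp [squareVertex, flipAt, update_comm h]

lemma embed_pair {i j : Fin n} (hij : i < j) (hF : ({i, j} : Finset (Fin n)).card = 2)
    (g : Fin n → Bool) : embed {i, j} hF g = squareVertex i j g := by
  have hemb : ⇑(({i, j} : Finset (Fin n)).orderEmbOfFin hF) = ![i, j] :=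
    (orderEmbOfFin_unique hF (by simp [Fin.forall_fin_two])
      (Fin.strictMono_iff_lt_succ.2 (by simpa using hij))).symm
  have hsymm : ∀ (m : Fin 2) (k : Fin n) (hk : k ∈ ({i, j} : Finset (Fin n))),
      (({i, j} : Finset (Fin n)).orderIsoOfFin hF).symm ⟨k, hk⟩ = m ↔ k = ![i, j] m := by
    intro m k hk
    rw [OrderIso.symm_apply_eq, Subtype.ext_iff, coe_orderIsoOfFin_apply, hemb]
  funext u k
  by_cases hk : k ∈ ({i, j} : Finset (Fin n))
  · rcases mem_insert.1 hk with rfl | hkj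
    · simp [embed, hk, (hsymm 0 k hk).2 rfl, squareVertex, update_of_ne hij.ne]
    · rw [mem_singleton.1 hkj] at hk ⊢
      simp [embed, hk, (hsymm 1 j hk).2 rfl, squareVertex]
  · simp only [mem_insert, mem_singleton, not_or] at hk
    simp [embed, squareVertex, hk.1, hk.2]

def IsGoodSquare (H : Set (Fin 2 → Bool)) (S : Set (Fin n → Bool)) (i j : Fin n)
    (x : Fin n → Bool) : Prop :=
  ExactCopy 2 H {u | squareVertex i j x u ∈ S}

lemma card_filter_eq_two_mul {i : Fin n} {P : (Fin n → Bool) → Prop} [DecidablePred P]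
    (hP : ∀ x, P (flipAt i x) ↔ P x) :
    #{x | P x} = 2 * #{x | x i = false ∧ P x} := by
  have hflip : #{x | P x ∧ ¬x i = false} = #{x | x i = false ∧ P x} :=
    card_equiv (flipAt_involutive i).toPerm fun x => by
      simp only [mem_filter, mem_univ, true_and, Involutive.coe_toPerm, hP]
      simp [flipAt, and_comm]
  rw [← card_filter_add_card_filter_not (s := univ.filter P) (fun x => x i = false),
    filter_filter, filter_filter, hflip, two_mul]
  simp only [and_comm]

lemma card_filter_eq_four_mul {i j : Fin n} (hij : i ≠ j) {P : (Fin n → Bool) → Prop}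
    [DecidablePred P] (hPi : ∀ x, P (flipAt i x) ↔ P x) (hPj : ∀ x, P (flipAt j x) ↔ P x) :
    #{x | P x} = 4 * #{x | x i = false ∧ x j = false ∧ P x} := by
  rw [card_filter_eq_two_mul hPi, card_filter_eq_two_mul (i := j) fun x => by
    show (flipAt j x) i = false ∧ P (flipAt j x) ↔ _
    rw [hPj, flipAt, update_of_ne hij], ← mul_assoc]
  simp only [and_left_comm]
  rfl

lemma goodCount_two_eq_sum (H : Set (Fin 2 → Bool)) (S : Set (Fin n → Bool)) :
    goodCount 2 H n S = ∑ p : Fin n × Fin n with p.1 < p.2,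
      #{x | x p.1 = false ∧ x p.2 = false ∧ IsGoodSquare H S p.1 p.2 x} := by
  rw [goodCount, Nat.card_eq_fintype_card, Fintype.card_subtype, ← card_sigma]
  symm
  refine card_bij (fun q _ => ({q.1.1, q.1.2}, q.2)) ?_ ?_ ?_
  · rintro ⟨⟨i, j⟩, x⟩ hq
    simp only [mem_sigma, mem_filter, mem_univ, true_and] at hq
    obtain ⟨hij, hxi, hxj, hgood⟩ := hq
    have hF : ({i, j} : Finset (Fin n)).card = 2 := card_pair hij.ne
    simp only [mem_filter, mem_univ, true_and]
    refine ⟨hF, by simp [hxi, hxj], ?_⟩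
    rwa [IsGood, embed_pair hij]
  · rintro ⟨⟨i, j⟩, x⟩ hq ⟨⟨i', j'⟩, x'⟩ hq' heq
    simp only [mem_sigma, mem_filter, mem_univ, true_and] at hq hq'
    simp only [Prod.mk.injEq] at heq
    obtain ⟨hF, rfl⟩ := heq
    have hi : i ∈ ({i', j'} : Finset (Fin n)) := hF ▸ mem_insert_self i {j}
    have hj : j ∈ ({i', j'} : Finset (Fin n)) := hF ▸ by simp
    have hi' : i' ∈ ({i, j} : Finset (Fin n)) := hF ▸ mem_insert_self i' {j'}
    simp only [mem_insert, mem_singleton] at hi hj hi'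
    have : i = i' ∧ j = j' := by grind
    simp [this]
  · rintro ⟨F, g⟩ hp
    simp only [mem_filter, mem_univ, true_and] at hp
    obtain ⟨hF, hg, hgood⟩ := hp
    obtain ⟨i, j, hij, rfl⟩ : ∃ i j, i < j ∧ F = {i, j} := by
      obtain ⟨a, b, hab, rfl⟩ := card_eq_two.1 hF
      rcases hab.lt_or_gt with h | h
      exacts [⟨a, b, h, rfl⟩, ⟨b, a, h, pair_comm a b⟩]
    refine ⟨⟨(i, j), g⟩, ?_, rfl⟩
    simp only [mem_sigma, mem_filter, mem_univ, true_and]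
    refine ⟨hij, hg i (by simp), hg j (by simp), ?_⟩
    rwa [IsGood, embed_pair hij] at hgood

-- Each square is counted once for each of its four vertices `x`.
lemma four_mul_goodCount_two (H : Set (Fin 2 → Bool)) (S : Set (Fin n → Bool)) :
    4 * goodCount 2 H n S =
      ∑ p : Fin n × Fin n with p.1 < p.2, #{x | IsGoodSquare H S p.1 p.2 x} := by
  rw [goodCount_two_eq_sum, mul_sum]
  refine sum_congr rfl fun p hp => ?_
  have hne : p.1 ≠ p.2 := (mem_filter.1 hp).2.ne
  exact (card_filter_eq_four_mul (P := IsGoodSquare H S p.1 p.2) hne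
    (fun x => by simp only [IsGoodSquare, squareVertex_flipAt_left])
    (fun x => by simp only [IsGoodSquare, squareVertex_flipAt_right hne])).symm

lemma IsGoodSquare.mem_iff_flipAt_flipAt_not_mem {H : Set (Fin 2 → Bool)}
    (hH : antipode '' H = Hᶜ) {S : Set (Fin n → Bool)} {i j : Fin n} (hij : i ≠ j)
    {x : Fin n → Bool} (hx : IsGoodSquare H S i j x) :
    x ∈ S ↔ flipAt i (flipAt j x) ∉ S := by
  have hK := congrArg (antipode ![x i, x j] ∈ ·) (hx.image_antipode hH)
  have hanti : Injective (antipode (d := 2)) := fun v w h => by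
    funext k; simpa [antipode] using congrFun h k
  simp only [hanti.mem_set_image, Set.mem_compl_iff, Set.mem_ofPred_eq, eq_iff_iff] at hK
  have h00 : squareVertex i j x ![x i, x j] = x := by simp [squareVertex]
  have h11 : squareVertex i j x (antipode ![x i, x j]) = flipAt i (flipAt j x) := by
    simp [squareVertex, antipode, flipAt, update_of_ne hij, update_comm hij]
  rwa [h00, h11] at hK

lemma card_isGoodSquare_le {H : Set (Fin 2 → Bool)} (hH : antipode '' H = Hᶜ)
    (S : Set (Fin n → Bool)) {i j : Fin n} (hij : i ≠ j) :
    #{x | IsGoodSquare H S i j x} ≤ #{x | flipAt i x ∈ S ↔ flipAt j x ∉ S} := by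
  refine card_le_card_of_injOn (flipAt i) (fun x hx => ?_) (flipAt_involutive i).injective.injOn
  simp only [coe_filter, mem_univ, true_and, Set.mem_ofPred_eq] at hx ⊢
  rw [flipAt_involutive i x, ← flipAt_comm hij]
  exact hx.mem_iff_flipAt_flipAt_not_mem hH hij

lemma four_mul_card_separated_pairs_le (P : Fin n → Prop) [DecidablePred P] :
    4 * #{p : Fin n × Fin n | p.1 < p.2 ∧ (P p.1 ↔ ¬P p.2)} ≤ n ^ 2 := by
  have hinj : #{p : Fin n × Fin n | p.1 < p.2 ∧ (P p.1 ↔ ¬P p.2)} ≤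
      #{p : Fin n × Fin n | P p.1 ∧ ¬P p.2} := by
    refine card_le_card_of_injOn (fun p => if P p.1 then p else p.swap) ?_ ?_
    · intro p hp
      simp only [coe_filter, mem_univ, true_and, Set.mem_ofPred_eq] at hp ⊢
      split_ifs with h <;> simp_all
    · rintro p hp q hq hpq
      simp only [coe_filter, mem_univ, true_and, Set.mem_ofPred_eq] at hp hq
      simp only at hpq
      split_ifs at hpq <;> grind
  have hprod : #{p : Fin n × Fin n | P p.1 ∧ ¬P p.2} = #{i | P i} * #{i | ¬P i} := by
    rw [← card_product, ← filter_product, univ_product_univ]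
  have hsum : #{i | P i} + #{i | ¬P i} = n := by
    rw [card_filter_add_card_filter_not, card_univ, Fintype.card_fin]
  calc 4 * #{p : Fin n × Fin n | p.1 < p.2 ∧ (P p.1 ↔ ¬P p.2)}
      ≤ 4 * #{i | P i} * #{i | ¬P i} := by rw [mul_assoc, ← hprod]; gcongr
    _ ≤ (#{i | P i} + #{i | ¬P i}) ^ 2 := four_mul_le_sq_add _ _
    _ = n ^ 2 := by rw [hsum]

lemma sixteen_mul_goodCount_two_le {H : Set (Fin 2 → Bool)} (hH : antipode '' H = Hᶜ)
    (S : Set (Fin n → Bool)) : 16 * goodCount 2 H n S ≤ n ^ 2 * 2 ^ n := by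
  calc 16 * goodCount 2 H n S
      = 4 * ∑ p : Fin n × Fin n with p.1 < p.2, #{x | IsGoodSquare H S p.1 p.2 x} := by
        rw [← four_mul_goodCount_two, ← mul_assoc]
        rfl
    _ ≤ 4 * ∑ p : Fin n × Fin n with p.1 < p.2, #{x | flipAt p.1 x ∈ S ↔ flipAt p.2 x ∉ S} :=
        Nat.mul_le_mul_left _ <| sum_le_sum fun p hp =>
          card_isGoodSquare_le hH S (mem_filter.1 hp).2.ne
    _ = ∑ x : Fin n → Bool,
          4 * #{p : Fin n × Fin n | p.1 < p.2 ∧ (flipAt p.1 x ∈ S ↔ ¬flipAt p.2 x ∈ S)} := by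
        rw [← mul_sum]
        congr 1
        convert sum_card_bipartiteAbove_eq_sum_card_bipartiteBelow
          (r := fun (p : Fin n × Fin n) x => flipAt p.1 x ∈ S ↔ flipAt p.2 x ∉ S) using 3 <;>
          ext <;> simp
    _ ≤ ∑ _x : Fin n → Bool, n ^ 2 :=
        sum_le_sum fun x _ => four_mul_card_separated_pairs_le (flipAt · x ∈ S)
    _ = n ^ 2 * 2 ^ n := by simp [mul_comm]

-- `Bool` is the Boolean ring `𝔽₂` (`+` is `xor`): this is the set of points of even weight on `A`.
def paritySet (A : Finset (Fin n)) : Set (Fin n → Bool) :=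
  {x | ∑ k ∈ A, x k = 0}

lemma squareVertex_mem_paritySet_iff {A : Finset (Fin n)} {i j : Fin n} (hi : i ∈ A)
    (hj : j ∉ A) (x : Fin n → Bool) (u : Fin 2 → Bool) :
    squareVertex i j x u ∈ paritySet A ↔ u 0 = ∑ k ∈ A.erase i, x k := by
  have hij : i ≠ j := ne_of_mem_of_not_mem hi hj
  have hrest : ∀ k ∈ A.erase i, squareVertex i j x u k = x k := fun k hk => by
    have hkj : k ≠ j := ne_of_mem_of_not_mem (mem_of_mem_erase hk) hj
    simp [squareVertex, update_of_ne hkj, update_of_ne (ne_of_mem_erase hk)]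
  rw [paritySet, Set.mem_ofPred_eq, ← add_sum_erase A _ hi, sum_congr rfl hrest,
    BooleanRing.add_eq_zero']
  simp [squareVertex, update_of_ne hij]

lemma isGoodSquare_paritySet {A : Finset (Fin n)} {i j : Fin n} (hi : i ∈ A) (hj : j ∉ A)
    (x : Fin n → Bool) : IsGoodSquare {v | v 0 = false} (paritySet A) i j x := by
  rw [IsGoodSquare]
  simp only [squareVertex_mem_paritySet_iff hi hj]
  exact exactCopy_setOf_apply_eq 0 _

lemma le_four_mul_goodCount_paritySet (m : Fin n) :
    m * (n - m) * 2 ^ n ≤ 4 * goodCount 2 {v | v 0 = false} n (paritySet (Iio m)) := by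
  rw [four_mul_goodCount_two]
  calc m * (n - m) * 2 ^ n
      = ∑ p ∈ Iio m ×ˢ Ici m,
          #{x | IsGoodSquare {v | v 0 = false} (paritySet (Iio m)) p.1 p.2 x} := by
        rw [sum_congr rfl fun p hp => ?_, sum_const, card_product, Fin.card_Iio, Fin.card_Ici,
          smul_eq_mul]
        simp only [mem_product, mem_Iio, mem_Ici] at hp
        rw [filter_true_of_mem fun x _ =>
          isGoodSquare_paritySet (mem_Iio.2 hp.1) (by simpa using hp.2) x]
        simp
    _ ≤ _ := sum_le_sum_of_subset fun p hp => by
        simp only [mem_product, mem_Iio, mem_Ici] at hp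
        simpa using hp.1.trans_le hp.2

lemma mul_sub_one_le_four_mul_half_mul (n : ℕ) : n * (n - 1) ≤ 4 * (n / 2 * (n - n / 2)) := by
  rcases Nat.even_or_odd' n with ⟨k, rfl | rfl⟩
  · rw [Nat.mul_div_cancel_left k two_pos, show 2 * k - k = k by omega]
    calc 2 * k * (2 * k - 1) ≤ 2 * k * (2 * k) := Nat.mul_le_mul_left _ (Nat.sub_le _ _)
      _ = 4 * (k * k) := by ring
  · rw [Nat.mul_add_div two_pos, Nat.div_eq_of_lt one_lt_two, add_zero,
      show 2 * k + 1 - k = k + 1 by omega, Nat.add_sub_cancel]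
    nlinarith

lemma gFrac_two_eq (H : Set (Fin 2 → Bool)) (S : Set (Fin n → Bool)) (hn : 2 ≤ n) :
    gFrac 2 H n S = 8 * goodCount 2 H n S / (n * (n - 1) * 2 ^ n) := by
  obtain ⟨k, rfl⟩ := Nat.exists_eq_add_of_le' hn
  rw [gFrac, Nat.cast_choose_two, Nat.add_sub_cancel, pow_add]
  push_cast
  field_simp
  ring

lemma exD_two_le {H : Set (Fin 2 → Bool)} (hH : antipode '' H = Hᶜ) (hn : 2 ≤ n) :
    exD 2 H n ≤ 1 / 2 + 1 / n := by
  refine ciSup_le fun S => ?_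
  have hn' : (2 : ℝ) ≤ n := by exact_mod_cast hn
  have hg : (16 * goodCount 2 H n S : ℝ) ≤ n ^ 2 * 2 ^ n := by
    exact_mod_cast sixteen_mul_goodCount_two_le hH S
  have hpos : (0 : ℝ) < n * (n - 1) * 2 ^ n := by
    have : (0 : ℝ) < n - 1 := by linarith
    positivity
  rw [gFrac_two_eq H S hn, div_le_iff₀ hpos,
    show (1 / 2 + 1 / n) * (n * (n - 1) * 2 ^ n : ℝ) = (n + 2) * (n - 1) * 2 ^ n / 2 by
      field_simp]
  nlinarith [pow_pos (two_pos : (0 : ℝ) < 2) n]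

lemma half_le_exD_two (hn : 2 ≤ n) : 1 / 2 ≤ exD 2 {v : Fin 2 → Bool | v 0 = false} n := by
  set m : Fin n := ⟨n / 2, by omega⟩
  refine le_ciSup_of_le (Set.finite_range _).bddAbove (paritySet (Iio m)) ?_
  have hg : n * (n - 1) * 2 ^ n ≤ 16 * goodCount 2 {v | v 0 = false} n (paritySet (Iio m)) :=
    calc n * (n - 1) * 2 ^ n ≤ 4 * (m * (n - m)) * 2 ^ n :=
          Nat.mul_le_mul_right _ (mul_sub_one_le_four_mul_half_mul n)
      _ = 4 * (m * (n - m) * 2 ^ n) := by ring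
      _ ≤ 16 * goodCount 2 {v | v 0 = false} n (paritySet (Iio m)) := by
          have := le_four_mul_goodCount_paritySet m
          omega
  have hn' : (2 : ℝ) ≤ n := by exact_mod_cast hn
  have hpos : (0 : ℝ) < n * (n - 1) * 2 ^ n := by
    have : (0 : ℝ) < n - 1 := by linarith
    positivity
  rw [gFrac_two_eq _ _ hn, le_div_iff₀ hpos]
  have hg' := (Nat.cast_le (α := ℝ)).2 hg
  push_cast [Nat.cast_sub (show 1 ≤ n by omega)] at hg'
  linarith

end CubeDensity

/-- λ(Z₃, 2) = 1/2, where Z₃ = {(0,0),(0,1)} consists of two adjacent vertices of Q₂. -/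
theorem dCubeDensity_Z3 :
    Filter.Tendsto
      (fun n => CubeDensity.exD 2 ({![false, false], ![false, true]} : Set (Fin 2 → Bool)) n)
      Filter.atTop (nhds (1 / 2 : ℝ)) := by
  have hZ3 : ({![false, false], ![false, true]} : Set (Fin 2 → Bool)) = {v | v 0 = false} := by
    ext v
    simp only [Set.mem_insert_iff, Set.mem_singleton_iff, funext_iff, Fin.forall_fin_two]
    cases v 1 <;> simp
  have hupper : Tendsto (fun n : ℕ => 1 / 2 + 1 / (n : ℝ)) atTop (nhds (1 / 2)) := by
    simpa using (tendsto_const_nhds (x := (1 / 2 : ℝ))).add tendsto_one_div_atTop_nhds_zero_nat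
  rw [hZ3]
  refine tendsto_of_tendsto_of_tendsto_of_le_of_le' tendsto_const_nhds hupper ?_ ?_
  · filter_upwards [eventually_ge_atTop 2] with n hn using CubeDensity.half_le_exD_two hn
  · filter_upwards [eventually_ge_atTop 2] with n hn
    exact CubeDensity.exD_two_le (CubeDensity.image_antipode_setOf_apply_eq_false 0) hn
end

section
/- Let H ⊆ {0,1}^d be a configuration in Q_d. Then the local d-cube density π(H,d) equals 1 if and only if H is layered. -/
/-!
If `H` is layered, the corresponding set of Hamming weights makes every sub-`d`-cube through
the origin good, so the local density is `1` for every `n ≥ d`.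

Conversely, translate a vertex of almost full local density to the origin. Double counting
gives a large set `A` of coordinates all of whose `d`-subsets span good subcubes, and Ramsey's
theorem, applied to the colouring of these `d`-subsets by the configuration they induce, gives
`d + 1` coordinates whose `d`-subsets all induce one configuration `K`, an exact copy of `H`.
Viewing these `d + 1` coordinates as a copy of `Q_(d+1)`, `K` is the trace on each facet
`x_p = 0`. Inserting a `0` in front of a pair of coordinates `(a, 0)` gives the same vertex as
inserting it behind the swapped pair `(0, a)`, so `K` is invariant under adjacent
transpositions, hence under all coordinate permutations: it is a union of weight layers.
-/

open Filter

namespace CubeDensity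

/-- The number of `H`-good sub-`d`-cubes of `Q_n` containing the vertex `v` (such a
sub-`d`-cube is determined by its set `F` of flip coordinates, its fixed values outside
`F` being those of `v`). -/
noncomputable def goodCountAt (d : ℕ) (H : Set (Fin d → Bool)) {n : ℕ}
    (S : Set (Fin n → Bool)) (v : Fin n → Bool) : ℕ :=
  Nat.card {F : Finset (Fin n) // ∃ hF : F.card = d, IsGood H S F hF v}

/-- The fraction of the `C(n,d)` sub-`d`-cubes of `Q_n` containing `v` that are
`H`-good for `S`. -/
noncomputable def gLocal (d : ℕ) (H : Set (Fin d → Bool)) {n : ℕ}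
    (S : Set (Fin n → Bool)) (v : Fin n → Bool) : ℝ :=
  (goodCountAt d H S v : ℝ) / (n.choose d : ℝ)

/-- `π_in(H,d,n)`: the maximum of the local `H`-good density over all pairs `v ∈ S`. -/
noncomputable def piIn (d : ℕ) (H : Set (Fin d → Bool)) (n : ℕ) : ℝ :=
  ⨆ (S : Set (Fin n → Bool)) (v : Fin n → Bool) (_ : v ∈ S), gLocal d H S v

/-- `π_out(H,d,n)`: the maximum of the local `H`-good density over all pairs `v ∉ S`. -/
noncomputable def piOut (d : ℕ) (H : Set (Fin d → Bool)) (n : ℕ) : ℝ :=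
  ⨆ (S : Set (Fin n → Bool)) (v : Fin n → Bool) (_ : v ∉ S), gLocal d H S v

/-- A configuration `H` in `Q_d` is layered if it is an exact copy of a configuration
determined by a set of Hamming weights. -/
def Layered (d : ℕ) (H : Set (Fin d → Bool)) : Prop :=
  ∃ W : Set ℕ, ExactCopy d {v : Fin d → Bool | (∑ j, (v j).toNat) ∈ W} H

end CubeDensity

namespace Ramsey

open Finset

variable {α κ : Type*}

def IsMonochromatic (c : Finset α → κ) (k : ℕ) (A : Finset α) : Prop :=
  ∃ k₀, ∀ F ⊆ A, F.card = k → c F = k₀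

def IsEndMonochromatic [LinearOrder α] (c : Finset α → κ) (k : ℕ) (B : Finset α) : Prop :=
  ∃ col : α → κ, ∀ x ∈ B, ∀ F ⊆ B.filter (x < ·), F.card = k → c (insert x F) = col x

def IsRamseyBound (κ : Type*) (k t N : ℕ) : Prop :=
  ∀ {α : Type} [LinearOrder α] (V : Finset α) (c : Finset α → κ), N ≤ V.card →
    ∃ A ⊆ V, A.card = t ∧ IsMonochromatic c k A

lemma exists_isEndMonochromatic {k : ℕ} (hk : ∀ t, ∃ N, IsRamseyBound κ k t N) (j : ℕ) :
    ∃ N, ∀ {α : Type} [LinearOrder α] (V : Finset α) (c : Finset α → κ), N ≤ V.card →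
      ∃ B ⊆ V, B.card = j ∧ IsEndMonochromatic c k B := by
  induction j with
  | zero => exact ⟨0, fun V c _ => ⟨∅, empty_subset V, card_empty, fun _ => c ∅, by simp⟩⟩
  | succ j ih =>
    obtain ⟨Nj, hNj⟩ := ih
    obtain ⟨N, hN⟩ := hk Nj
    refine ⟨N + 1, fun V c hV => ?_⟩
    have hVne : V.Nonempty := card_pos.1 (by omega)
    set a := V.min' hVne
    have haV : a ∈ V := V.min'_mem hVne
    obtain ⟨A, hAV, hAcard, k₀, hk₀⟩ := hN (V.erase a) (fun F => c (insert a F))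
      (by rw [card_erase_of_mem haV]; omega)
    obtain ⟨B, hBA, hBcard, col, hcol⟩ := hNj A c hAcard.ge
    have hlt : ∀ x ∈ B, a < x := fun x hx => by
      obtain ⟨hxa, hxV⟩ := mem_erase.1 (hAV (hBA hx))
      exact lt_of_le_of_ne (V.min'_le x hxV) (Ne.symm hxa)
    have haB : a ∉ B := fun h => lt_irrefl a (hlt a h)
    refine ⟨insert a B, insert_subset haV ((hBA.trans hAV).trans (erase_subset _ _)),
      by rw [card_insert_of_notMem haB, hBcard], Function.update col a k₀, ?_⟩
    intro x hx F hF hFk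
    rcases mem_insert.1 hx with rfl | hx
    · rw [Function.update_self]
      refine hk₀ F (fun y hy => ?_) hFk
      obtain ⟨hy, hxy⟩ := mem_filter.1 (hF hy)
      exact hBA ((mem_insert.1 hy).resolve_left (ne_of_gt hxy))
    · rw [Function.update_of_ne (ne_of_gt (hlt x hx))]
      refine hcol x hx F (fun y hy => ?_) hFk
      obtain ⟨hy, hxy⟩ := mem_filter.1 (hF hy)
      refine mem_filter.2 ⟨(mem_insert.1 hy).resolve_left ?_, hxy⟩
      rintro rfl
      exact lt_asymm hxy (hlt x hx)

lemma IsEndMonochromatic.exists_isMonochromatic [LinearOrder α] [Fintype κ] {c : Finset α → κ}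
    {k t : ℕ} {B : Finset α} (hB : IsEndMonochromatic c k B)
    (ht : Fintype.card κ * (t - 1) < B.card) :
    ∃ A ⊆ B, A.card = t ∧ IsMonochromatic c (k + 1) A := by
  classical
  obtain ⟨col, hcol⟩ := hB
  obtain ⟨k₀, -, hk₀⟩ := exists_lt_card_fiber_of_mul_lt_card_of_maps_to (s := B)
    (t := univ) (f := col) (fun _ _ => mem_univ _) (by simpa using ht)
  obtain ⟨A, hA, hAcard⟩ := exists_subset_card_eq (s := B.filter (col · = k₀)) (n := t)
    (by omega)
  refine ⟨A, hA.trans (filter_subset _ _), hAcard, k₀, fun F hFA hFk => ?_⟩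
  have hFne : F.Nonempty := card_pos.1 (by omega)
  have hxF := F.min'_mem hFne
  obtain ⟨hxB, hxk⟩ := mem_filter.1 (hA (hFA hxF))
  rw [← insert_erase hxF, hcol _ hxB _ ?_ (by simp [card_erase_of_mem hxF, hFk]), hxk]
  intro y hy
  obtain ⟨hyx, hyF⟩ := mem_erase.1 hy
  exact mem_filter.2 ⟨(mem_filter.1 (hA (hFA hyF))).1,
    lt_of_le_of_ne (F.min'_le y hyF) (Ne.symm hyx)⟩

theorem exists_isRamseyBound [Fintype κ] (k t : ℕ) : ∃ N, IsRamseyBound κ k t N := by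
  induction k generalizing t with
  | zero =>
    refine ⟨t, fun V c hV => ?_⟩
    obtain ⟨A, hAV, hA⟩ := exists_subset_card_eq hV
    exact ⟨A, hAV, hA, c ∅, fun F _ hF => by rw [card_eq_zero.1 hF]⟩
  | succ k ih =>
    obtain ⟨N, hN⟩ := exists_isEndMonochromatic ih (Fintype.card κ * (t - 1) + 1)
    refine ⟨N, fun V c hV => ?_⟩
    obtain ⟨B, hBV, hBcard, hB⟩ := hN V c hV
    obtain ⟨A, hAB, hA, hmono⟩ := hB.exists_isMonochromatic (t := t) (by omega)
    exact ⟨A, hAB.trans hBV, hA, hmono⟩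

end Ramsey

namespace CubeDensity

open Finset

section ExactCopy

variable {d : ℕ}

lemma autMap_comp (σ₂ σ₁ : Equiv.Perm (Fin d)) (ε₂ ε₁ : Fin d → Bool) :
    autMap d σ₂ ε₂ ∘ autMap d σ₁ ε₁ =
      autMap d (σ₂ * σ₁) (fun i => xor (ε₁ (σ₂⁻¹ i)) (ε₂ i)) := by
  funext v i
  simp [autMap, mul_inv_rev, Equiv.Perm.mul_apply]

lemma ExactCopy.trans {X Y Z : Set (Fin d → Bool)} (h₁ : ExactCopy d X Y)
    (h₂ : ExactCopy d Y Z) : ExactCopy d X Z := by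
  obtain ⟨σ₁, ε₁, rfl⟩ := h₁
  obtain ⟨σ₂, ε₂, rfl⟩ := h₂
  exact ⟨σ₂ * σ₁, _, by rw [← autMap_comp, Set.image_comp]⟩

lemma ExactCopy.symm {X Y : Set (Fin d → Bool)} (h : ExactCopy d X Y) : ExactCopy d Y X := by
  obtain ⟨σ, ε, rfl⟩ := h
  refine ⟨σ⁻¹, fun i => ε (σ i), ?_⟩
  rw [← Set.image_comp, autMap_comp]
  convert Set.image_id X using 2 with v
  funext i
  simp [autMap]

lemma exactCopy_image_autMap_iff {X Y : Set (Fin d → Bool)} (σ : Equiv.Perm (Fin d))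
    (ε : Fin d → Bool) : ExactCopy d X (autMap d σ ε '' Y) ↔ ExactCopy d X Y :=
  ⟨fun h => h.trans (ExactCopy.symm ⟨σ, ε, rfl⟩), fun h => h.trans ⟨σ, ε, rfl⟩⟩

end ExactCopy


section Embed

variable {n m d : ℕ}

lemma embed_orderEmbOfFin (F : Finset (Fin n)) (hF : F.card = d) (g : Fin n → Bool)
    (u : Fin d → Bool) (k : Fin d) : embed F hF g u (F.orderEmbOfFin hF k) = u k := by
  rw [embed, dif_pos (F.orderEmbOfFin_mem hF k)]
  congr 1
  rw [OrderIso.symm_apply_eq]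
  exact Subtype.ext (F.coe_orderIsoOfFin_apply hF k).symm

lemma embed_of_notMem {F : Finset (Fin n)} (hF : F.card = d) (g : Fin n → Bool)
    (u : Fin d → Bool) {i : Fin n} (hi : i ∉ F) : embed F hF g u i = g i :=
  dif_neg hi

lemma embed_eq_of_forall {F : Finset (Fin n)} (hF : F.card = d) {g x : Fin n → Bool}
    {u : Fin d → Bool} (h₁ : ∀ k, x (F.orderEmbOfFin hF k) = u k) (h₂ : ∀ i ∉ F, x i = g i) :
    embed F hF g u = x := by
  funext i
  by_cases hi : i ∈ F
  · obtain ⟨k, rfl⟩ : i ∈ Set.range (F.orderEmbOfFin hF) := by simpa using hi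
    rw [embed_orderEmbOfFin, h₁]
  · rw [embed_of_notMem hF g u hi, h₂ i hi]

lemma embed_map_orderEmbOfFin (B : Finset (Fin n)) (hB : B.card = m) (F : Finset (Fin m))
    (hF : F.card = d) (g : Fin n → Bool) (u : Fin d → Bool) :
    embed (F.map (B.orderEmbOfFin hB).toEmbedding) ((card_map _).trans hF) g u =
      embed B hB g (embed F hF (g ∘ B.orderEmbOfFin hB) u) := by
  set b := B.orderEmbOfFin hB
  have hb : ∀ k, (F.map b.toEmbedding).orderEmbOfFin ((card_map _).trans hF) k =
      b (F.orderEmbOfFin hF k) := by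
    refine congrFun (orderEmbOfFin_unique _ (fun k => ?_) ?_).symm
    · exact mem_map_of_mem _ (F.orderEmbOfFin_mem hF k)
    · exact b.strictMono.comp (F.orderEmbOfFin hF).strictMono
  refine embed_eq_of_forall _ (fun k => ?_) (fun i hi => ?_)
  · rw [hb, embed_orderEmbOfFin, embed_orderEmbOfFin]
  · by_cases hiB : i ∈ B
    · obtain ⟨j, rfl⟩ : i ∈ Set.range b := by simpa [b] using hiB
      have hj : j ∉ F := fun hj => hi (mem_map_of_mem _ hj)
      rw [embed_orderEmbOfFin, embed_of_notMem hF _ u hj, Function.comp_apply]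
    · exact embed_of_notMem hB g _ hiB

lemma embed_univ_erase (p : Fin (d + 1)) (g : Fin (d + 1) → Bool) (u : Fin d → Bool) :
    embed (univ.erase p) (by simp) g u = Fin.insertNth p (g p) u := by
  have hp : ∀ k, (univ.erase p).orderEmbOfFin (by simp) k = p.succAbove k :=
    congrFun (orderEmbOfFin_unique _ (fun k => by simp [Fin.succAbove_ne])
      (Fin.strictMono_succAbove p)).symm
  refine embed_eq_of_forall _ (fun k => ?_) (fun i hi => ?_)
  · rw [hp, Fin.insertNth_apply_succAbove]
  · obtain rfl : i = p := by simpa using hi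
    exact Fin.insertNth_apply_same _ _ _

lemma sum_toNat_embed_false (F : Finset (Fin n)) (hF : F.card = d) (u : Fin d → Bool) :
    ∑ i, (embed F hF (fun _ => false) u i).toNat = ∑ k, (u k).toNat := by
  calc ∑ i, (embed F hF (fun _ => false) u i).toNat
      = ∑ i ∈ F, (embed F hF (fun _ => false) u i).toNat :=
        (sum_subset (subset_univ F) fun i _ hi => by simp [embed_of_notMem hF _ u hi]).symm
    _ = ∑ i ∈ univ.map (F.orderEmbOfFin hF).toEmbedding,
          (embed F hF (fun _ => false) u i).toNat := by rw [map_orderEmbOfFin_univ]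
    _ = ∑ k, (embed F hF (fun _ => false) u (F.orderEmbOfFin hF k)).toNat := sum_map _ _ _
    _ = ∑ k, (u k).toNat := by simp only [embed_orderEmbOfFin]

end Embed

section Weights

variable {d : ℕ}

lemma sum_toNat_eq_card (y : Fin d → Bool) :
    ∑ j, (y j).toNat = Fintype.card {j // y j = true} := by
  rw [Fintype.card_subtype, card_filter]
  exact sum_congr rfl fun j _ => by cases y j <;> rfl

lemma exists_perm_comp_eq {y y' : Fin d → Bool}
    (h : ∑ j, (y j).toNat = ∑ j, (y' j).toNat) : ∃ σ : Equiv.Perm (Fin d), y ∘ σ = y' := by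
  have htrue : Fintype.card {j // y' j = true} = Fintype.card {j // y j = true} := by
    rw [← sum_toNat_eq_card, ← sum_toNat_eq_card, h]
  have hfalse : Fintype.card {j // ¬ y' j = true} = Fintype.card {j // ¬ y j = true} := by
    rw [Fintype.card_subtype_compl, Fintype.card_subtype_compl, htrue]
  refine ⟨Equiv.subtypeCongr (Fintype.equivOfCardEq htrue) (Fintype.equivOfCardEq hfalse), ?_⟩
  funext j
  by_cases hj : y' j = true
  · simpa [Equiv.subtypeCongr, hj] using (Fintype.equivOfCardEq htrue ⟨j, hj⟩).2
  · simpa [Equiv.subtypeCongr, hj] using (Fintype.equivOfCardEq hfalse ⟨j, hj⟩).2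

lemma exists_weights_eq_of_comp_perm_mem_iff {K : Set (Fin d → Bool)}
    (hK : ∀ (σ : Equiv.Perm (Fin d)) y, y ∘ σ ∈ K ↔ y ∈ K) :
    ∃ W : Set ℕ, {y : Fin d → Bool | ∑ j, (y j).toNat ∈ W} = K := by
  refine ⟨{w | ∃ y ∈ K, ∑ j, (y j).toNat = w}, Set.ext fun y => ⟨?_, fun hy => ⟨y, hy, rfl⟩⟩⟩
  rintro ⟨y₀, hy₀, hw⟩
  obtain ⟨σ, rfl⟩ := exists_perm_comp_eq hw
  exact (hK σ y₀).2 hy₀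

/-- Around position `i` both sides read `false, y i, false`. -/
lemma insertNth_false_comp_swap {m : ℕ} (i : Fin m) {y : Fin (m + 1) → Bool}
    (hy : y i.succ = false) :
    Fin.insertNth (α := fun _ => Bool) i.castSucc.castSucc false y =
      Fin.insertNth (α := fun _ => Bool) i.succ.succ false (y ∘ Equiv.swap i.castSucc i.succ) := by
  have hPQ : i.castSucc.castSucc < i.succ.succ := by simp [Fin.lt_def]
  funext k
  rcases lt_trichotomy k i.castSucc.castSucc with hk | rfl | hk
  · rw [Fin.insertNth_apply_below hk, Fin.insertNth_apply_below (hk.trans hPQ)]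
    simp only [eq_rec_constant, Function.comp_apply]
    rw [Equiv.swap_apply_of_ne_of_ne] <;>
      simp only [ne_eq, Fin.ext_iff, Fin.lt_def, Fin.val_castSucc, Fin.val_succ,
        Fin.coe_castPred] at hk ⊢ <;> omega
  · rw [Fin.insertNth_apply_same, Fin.insertNth_apply_below hPQ]
    simp only [eq_rec_constant, Function.comp_apply]
    rw [show i.castSucc.castSucc.castPred (hPQ.trans_le (Fin.le_last _)).ne = i.castSucc from rfl,
      Equiv.swap_apply_left, hy]
  · rw [Fin.insertNth_apply_above hk]
    rcases lt_trichotomy k i.succ.succ with hk' | rfl | hk'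
    · rw [Fin.insertNth_apply_below hk']
      have hk₁ : k.castPred (hk'.trans_le (Fin.le_last _)).ne = i.succ := by
        simp only [Fin.ext_iff, Fin.lt_def, Fin.val_castSucc, Fin.val_succ,
          Fin.coe_castPred] at hk hk' ⊢
        omega
      have hk₂ : k.pred (Fin.ne_zero_of_lt hk) = i.castSucc := by
        simp only [Fin.ext_iff, Fin.lt_def, Fin.val_castSucc, Fin.val_succ,
          Fin.val_pred] at hk hk' ⊢
        omega
      simp [hk₁, hk₂]
    · rw [Fin.insertNth_apply_same]
      simpa using hy
    · rw [Fin.insertNth_apply_above hk']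
      simp only [eq_rec_constant, Function.comp_apply]
      rw [Equiv.swap_apply_of_ne_of_ne] <;>
        simp only [ne_eq, Fin.ext_iff, Fin.lt_def, Fin.val_castSucc, Fin.val_succ,
          Fin.val_pred] at hk' ⊢ <;> omega

lemma comp_swap_mem_iff_of_insertNth {m : ℕ} {K : Set (Fin (m + 1) → Bool)}
    {T : Set (Fin (m + 2) → Bool)} (hK : ∀ p y, y ∈ K ↔ Fin.insertNth p false y ∈ T)
    (i : Fin m) (y : Fin (m + 1) → Bool) :
    y ∘ Equiv.swap i.castSucc i.succ ∈ K ↔ y ∈ K := by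
  have key : ∀ y : Fin (m + 1) → Bool, y i.succ = false →
      (y ∘ Equiv.swap i.castSucc i.succ ∈ K ↔ y ∈ K) := fun y hy => by
    rw [hK i.succ.succ, hK i.castSucc.castSucc, insertNth_false_comp_swap i hy]
  cases hy : y i.succ
  · exact key y hy
  cases hy' : y i.castSucc
  · have hswap : (y ∘ Equiv.swap i.castSucc i.succ) ∘ Equiv.swap i.castSucc i.succ = y := by
      funext j
      simp
    rw [← key _ (by simpa using hy'), hswap]
  · have hswap : y ∘ Equiv.swap i.castSucc i.succ = y := by
      funext j
      simp only [Function.comp_apply, Equiv.swap_apply_def]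
      split_ifs with h₁ h₂ <;> simp_all
    rw [hswap]

lemma comp_perm_mem_iff_of_insertNth {K : Set (Fin d → Bool)} {T : Set (Fin (d + 1) → Bool)}
    (hK : ∀ p y, y ∈ K ↔ Fin.insertNth p false y ∈ T) (σ : Equiv.Perm (Fin d))
    (y : Fin d → Bool) : y ∘ σ ∈ K ↔ y ∈ K := by
  cases d with
  | zero => rw [Subsingleton.elim (y ∘ σ) y]
  | succ m =>
    have hσ : σ ∈ Submonoid.closure (Set.range fun i : Fin m => Equiv.swap i.castSucc i.succ) := by
      rw [Equiv.Perm.mclosure_swap_castSucc_succ]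
      trivial
    induction hσ using Submonoid.closure_induction generalizing y with
    | mem τ hτ =>
      obtain ⟨i, rfl⟩ := hτ
      exact comp_swap_mem_iff_of_insertNth hK i y
    | one => rfl
    | mul τ₁ τ₂ _ _ h₁ h₂ => exact (h₂ (y ∘ τ₁)).trans (h₁ y)

end Weights

section Averaging

variable {α : Type*} [Fintype α] [DecidableEq α]

/-- Double counting pairs `F ⊆ A`: on average an `R`-set contains fewer than one member
of `𝒜`. -/
lemma exists_card_eq_forall_not_subset {𝒜 : Finset (Finset α)} {d R : ℕ}
    (h𝒜 : ∀ F ∈ 𝒜, F.card = d) (hdR : d ≤ R) (hR : R ≤ Fintype.card α)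
    (hsmall : #𝒜 * R.choose d < (Fintype.card α).choose d) :
    ∃ A : Finset α, A.card = R ∧ ∀ F ∈ 𝒜, ¬ F ⊆ A := by
  by_contra! hcover
  set n := Fintype.card α
  have hcount : #(powersetCard R (univ : Finset α)) • 1 ≤ #𝒜 • (n - d).choose (R - d) := by
    refine card_nsmul_le_card_nsmul' (R := ℕ) (· ⊆ ·) (fun A hA => ?_) (fun F hF => ?_)
    · obtain ⟨F, hF, hFA⟩ := hcover A (mem_powersetCard_univ.1 hA)
      exact card_pos.2 ⟨F, (mem_bipartiteBelow _).2 ⟨hF, hFA⟩⟩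
    · rw [bipartiteAbove, card_filter_powersetCard_subset F univ R (subset_univ F)
        ((h𝒜 F hF).trans_le hdR), h𝒜 F hF, card_univ, Nat.cast_id]
  rw [card_powersetCard, card_univ, smul_eq_mul, smul_eq_mul, mul_one] at hcount
  have hpos : 0 < (n - d).choose (R - d) := Nat.choose_pos (by omega)
  have := calc n.choose R * R.choose d
      ≤ #𝒜 * (n - d).choose (R - d) * R.choose d := Nat.mul_le_mul_right _ hcount
    _ = #𝒜 * R.choose d * (n - d).choose (R - d) := by ring
    _ < n.choose d * (n - d).choose (R - d) := Nat.mul_lt_mul_of_pos_right hsmall hpos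
  rw [Nat.choose_mul hdR] at this
  exact lt_irrefl _ this

end Averaging

section Density

variable {n d : ℕ}

open scoped Classical in
lemma goodCountAt_add_card_filter_not (H : Set (Fin d → Bool)) (S : Set (Fin n → Bool))
    (v : Fin n → Bool) :
    goodCountAt d H S v +
        #{F ∈ powersetCard d (univ : Finset (Fin n)) | ¬ ∃ hF : F.card = d, IsGood H S F hF v} =
      n.choose d := by
  have hgood : goodCountAt d H S v =
      #{F ∈ powersetCard d (univ : Finset (Fin n)) | ∃ hF : F.card = d, IsGood H S F hF v} := by
    rw [goodCountAt, Nat.card_eq_fintype_card, Fintype.card_subtype]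
    congr 1
    ext F
    simp only [mem_filter, mem_univ, true_and, mem_powersetCard_univ]
    exact ⟨fun h => ⟨h.1, h⟩, fun h => h.2⟩
  rw [hgood, card_filter_add_card_filter_not, card_powersetCard, card_univ, Fintype.card_fin]

lemma gLocal_le_one (H : Set (Fin d → Bool)) (S : Set (Fin n → Bool)) (v : Fin n → Bool) :
    gLocal d H S v ≤ 1 := by
  have hsum := goodCountAt_add_card_filter_not H S v
  exact div_le_one_of_le₀ (by exact_mod_cast (by omega : goodCountAt d H S v ≤ n.choose d))
    (Nat.cast_nonneg _)

lemma gLocal_eq_one {H : Set (Fin d → Bool)} {S : Set (Fin n → Bool)} {v : Fin n → Bool}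
    (hn : d ≤ n) (hgood : ∀ F hF, IsGood H S F hF v) : gLocal d H S v = 1 := by
  classical
  have hsum := goodCountAt_add_card_filter_not H S v
  rw [filter_false_of_mem fun F hF h => h ⟨_, hgood F (mem_powersetCard_univ.1 hF)⟩,
    card_empty, add_zero] at hsum
  rw [gLocal, hsum, div_self (by exact_mod_cast (Nat.choose_pos hn).ne')]

lemma exists_card_eq_forall_isGood {H : Set (Fin d → Bool)} {S : Set (Fin n → Bool)}
    {v : Fin n → Bool} {R : ℕ} (hdR : d ≤ R) (hRn : R ≤ n)
    (hdense : 1 - 1 / (R.choose d : ℝ) < gLocal d H S v) :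
    ∃ A : Finset (Fin n), A.card = R ∧ ∀ F ⊆ A, ∀ hF : F.card = d, IsGood H S F hF v := by
  classical
  set bad := {F ∈ powersetCard d (univ : Finset (Fin n)) | ¬ ∃ hF : F.card = d, IsGood H S F hF v}
  have hsum : (goodCountAt d H S v : ℝ) + #bad = n.choose d := by
    exact_mod_cast goodCountAt_add_card_filter_not H S v
  have hR : (0 : ℝ) < R.choose d := by exact_mod_cast Nat.choose_pos hdR
  have hn : (0 : ℝ) < n.choose d := by exact_mod_cast Nat.choose_pos (hdR.trans hRn)
  have hsmall : (#bad : ℝ) * R.choose d < n.choose d := by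
    rw [gLocal, lt_div_iff₀ hn] at hdense
    have hexpand :
        (1 - 1 / (R.choose d : ℝ)) * n.choose d = n.choose d - n.choose d / R.choose d := by
      ring
    exact (lt_div_iff₀ hR).1 (by linarith)
  obtain ⟨A, hA, hAbad⟩ := exists_card_eq_forall_not_subset (𝒜 := bad)
    (fun F hF => mem_powersetCard_univ.1 (mem_filter.1 hF).1) hdR (by simpa using hRn)
    (by simpa using (by exact_mod_cast hsmall : #bad * R.choose d < n.choose d))
  refine ⟨A, hA, fun F hFA hF => ?_⟩
  by_contra hbad
  exact hAbad F (mem_filter.2 ⟨mem_powersetCard_univ.2 hF, fun ⟨_, h⟩ => hbad h⟩) hFA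

lemma iSup_gLocal_le (H : Set (Fin d → Bool)) (P : Set (Fin n → Bool) → (Fin n → Bool) → Prop)
    {c : ℝ} (hc : 0 ≤ c) (h : ∀ (S : Set (Fin n → Bool)) v, gLocal d H S v ≤ c) :
    ⨆ (S : Set (Fin n → Bool)) (v : Fin n → Bool) (_ : P S v), gLocal d H S v ≤ c :=
  Real.iSup_le (fun S => Real.iSup_le (fun v => Real.iSup_le (fun _ => h S v) hc) hc) hc

lemma le_iSup_gLocal (H : Set (Fin d → Bool)) (P : Set (Fin n → Bool) → (Fin n → Bool) → Prop)
    {S : Set (Fin n → Bool)} {v : Fin n → Bool} (hP : P S v) :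
    gLocal d H S v ≤ ⨆ (S : Set (Fin n → Bool)) (v : Fin n → Bool) (_ : P S v), gLocal d H S v := by
  have hbdd : ∀ S v, ⨆ (_ : P S v), gLocal d H S v ≤ 1 := fun S v =>
    Real.iSup_le (fun _ => gLocal_le_one H S v) zero_le_one
  refine le_ciSup_of_le ⟨1, Set.forall_mem_range.2 fun S => ?_⟩ S
    (le_ciSup_of_le ⟨1, Set.forall_mem_range.2 (hbdd S)⟩ v
      (le_ciSup_of_le ⟨1, Set.forall_mem_range.2 fun _ => gLocal_le_one H S v⟩ hP le_rfl))
  exact Real.iSup_le (hbdd S) zero_le_one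

lemma gLocal_le_max (H : Set (Fin d → Bool)) (S : Set (Fin n → Bool)) (v : Fin n → Bool) :
    gLocal d H S v ≤ max (piIn d H n) (piOut d H n) := by
  by_cases hv : v ∈ S
  · exact le_max_of_le_left (le_iSup_gLocal H (fun S v => v ∈ S) hv)
  · exact le_max_of_le_right (le_iSup_gLocal H (fun S v => v ∉ S) hv)

lemma max_le_of_forall_gLocal_le (H : Set (Fin d → Bool)) {c : ℝ} (hc : 0 ≤ c)
    (h : ∀ (S : Set (Fin n → Bool)) v, gLocal d H S v ≤ c) :
    max (piIn d H n) (piOut d H n) ≤ c :=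
  max_le (iSup_gLocal_le H _ hc h) (iSup_gLocal_le H _ hc h)

end Density

section Characterization

variable {n d : ℕ}

lemma embed_false_xor (F : Finset (Fin n)) (hF : F.card = d) (v : Fin n → Bool)
    (u : Fin d → Bool) :
    (fun i => xor (embed F hF (fun _ => false) u i) (v i)) =
      embed F hF v (autMap d 1 (fun k => v (F.orderEmbOfFin hF k)) u) :=
  (embed_eq_of_forall hF (fun k => by simp [embed_orderEmbOfFin, autMap])
    (fun i hi => by simp [embed_of_notMem hF _ _ hi])).symm

lemma isGood_xor_iff (H : Set (Fin d → Bool)) (S : Set (Fin n → Bool)) (F : Finset (Fin n))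
    (hF : F.card = d) (v : Fin n → Bool) :
    IsGood H {x | (fun i => xor (x i) (v i)) ∈ S} F hF (fun _ => false) ↔ IsGood H S F hF v := by
  set ε := fun k => v (F.orderEmbOfFin hF k)
  have hinv : Function.Involutive (autMap d 1 ε) := fun u => by
    funext i
    simp [autMap]
  have hconfig : {u | embed F hF (fun _ => false) u ∈ {x | (fun i => xor (x i) (v i)) ∈ S}} =
      autMap d 1 ε '' {u | embed F hF v u ∈ S} := by
    rw [hinv.image_eq_preimage_symm]
    ext u
    simp only [Set.mem_ofPred_eq, Set.mem_preimage, embed_false_xor, ε]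
  rw [IsGood, IsGood, hconfig, exactCopy_image_autMap_iff]

lemma gLocal_xor (H : Set (Fin d → Bool)) (S : Set (Fin n → Bool)) (v : Fin n → Bool) :
    gLocal d H {x | (fun i => xor (x i) (v i)) ∈ S} (fun _ => false) = gLocal d H S v := by
  simp only [gLocal, goodCountAt, isGood_xor_iff]

lemma exists_weights_of_forall_config_eq {S : Set (Fin n → Bool)} {B : Finset (Fin n)}
    (hB : B.card = d + 1) {K : Set (Fin d → Bool)}
    (hK : ∀ F ⊆ B, ∀ hF : F.card = d, {u | embed F hF (fun _ => false) u ∈ S} = K) :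
    ∃ W : Set ℕ, {y : Fin d → Bool | ∑ j, (y j).toNat ∈ W} = K := by
  refine exists_weights_eq_of_comp_perm_mem_iff (comp_perm_mem_iff_of_insertNth
    (T := {x | embed B hB (fun _ => false) x ∈ S}) fun p y => ?_)
  have hFB : (univ.erase p).map (B.orderEmbOfFin hB).toEmbedding ⊆ B := fun i hi => by
    obtain ⟨j, -, rfl⟩ := mem_map.1 hi
    exact B.orderEmbOfFin_mem hB j
  rw [← hK _ hFB ((card_map _).trans (by simp)), Set.mem_ofPred_eq,
    embed_map_orderEmbOfFin B hB (univ.erase p) (by simp), embed_univ_erase]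
  rfl

lemma exists_gLocal_gt_of_tendsto {H : Set (Fin d → Bool)}
    (hT : Tendsto (fun n => max (piIn d H n) (piOut d H n)) atTop (nhds 1)) {c : ℝ}
    (hc₀ : 0 ≤ c) (hc₁ : c < 1) (R : ℕ) :
    ∃ n ≥ R, ∃ (S : Set (Fin n → Bool)) (v : Fin n → Bool), c < gLocal d H S v := by
  obtain ⟨n, hn, hRn⟩ := ((hT.eventually (lt_mem_nhds hc₁)).and (eventually_ge_atTop R)).exists
  refine ⟨n, hRn, ?_⟩
  by_contra! hsmall
  exact (max_le_of_forall_gLocal_le H hc₀ hsmall).not_gt hn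

theorem layered_of_tendsto {H : Set (Fin d → Bool)}
    (hT : Tendsto (fun n => max (piIn d H n) (piOut d H n)) atTop (nhds 1)) : Layered d H := by
  classical
  obtain ⟨N, hN⟩ := Ramsey.exists_isRamseyBound (κ := Set (Fin d → Bool)) d (d + 1)
  set R := max N d
  have hC : (1 : ℝ) ≤ R.choose d := by exact_mod_cast Nat.choose_pos (le_max_right N d)
  obtain ⟨n, hRn, S, v, hdense⟩ := exists_gLocal_gt_of_tendsto hT
    (c := 1 - 1 / R.choose d) (sub_nonneg.2 ((div_le_one (by linarith)).2 hC))
    (sub_lt_self 1 (one_div_pos.2 (by linarith))) R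
  rw [← gLocal_xor] at hdense
  obtain ⟨A, hA, hgood⟩ := exists_card_eq_forall_isGood (le_max_right N d) hRn hdense
  set S₀ := {x : Fin n → Bool | (fun i => xor (x i) (v i)) ∈ S}
  obtain ⟨B, hBA, hB, K, hK⟩ := hN A (fun F => if hF : F.card = d then
    {u | embed F hF (fun _ => false) u ∈ S₀} else ∅) (hA ▸ le_max_left N d)
  have hBK : ∀ F ⊆ B, ∀ hF : F.card = d, {u | embed F hF (fun _ => false) u ∈ S₀} = K :=
    fun F hFB hF => by simpa [hF] using hK F hFB hF
  obtain ⟨F, hFB, hF⟩ := exists_subset_card_eq (s := B) (n := d) (by omega)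
  have hHK : ExactCopy d H K := hBK F hFB hF ▸ hgood F (hFB.trans hBA) hF
  obtain ⟨W, hW⟩ := exists_weights_of_forall_config_eq hB hBK
  exact ⟨W, hW ▸ hHK.symm⟩

theorem tendsto_of_layered {H : Set (Fin d → Bool)} (hL : Layered d H) :
    Tendsto (fun n => max (piIn d H n) (piOut d H n)) atTop (nhds 1) := by
  obtain ⟨W, hW⟩ := hL
  refine tendsto_atTop_of_eventually_const (i₀ := d) fun n hn => le_antisymm
    (max_le_of_forall_gLocal_le H zero_le_one fun S v => gLocal_le_one H S v) ?_
  have hone : gLocal d H {x : Fin n → Bool | ∑ i, (x i).toNat ∈ W} (fun _ => false) = 1 :=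
    gLocal_eq_one hn fun F hF => by
      simpa [IsGood, sum_toNat_embed_false] using hW.symm
  exact hone ▸ gLocal_le_max _ _ _

end Characterization

end CubeDensity

theorem localDensity_eq_one_iff_layered_general (d : ℕ) (H : Set (Fin d → Bool)) :
    Filter.Tendsto (fun n => max (CubeDensity.piIn d H n) (CubeDensity.piOut d H n))
      Filter.atTop (nhds (1 : ℝ)) ↔ CubeDensity.Layered d H :=
  ⟨CubeDensity.layered_of_tendsto, CubeDensity.tendsto_of_layered⟩

/-- The local `d`-cube density `π(H,d) = max{π_in(H,d), π_out(H,d)}` equals `1` if and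
only if `H` is layered.  (Here `π(H,d)` is the limit as `n → ∞` of
`max{π_in(H,d,n), π_out(H,d,n)}`.) -/
theorem localDensity_eq_one_iff_layered (d : ℕ) (hd : 1 ≤ d) (H : Set (Fin d → Bool)) :
    Filter.Tendsto (fun n => max (CubeDensity.piIn d H n) (CubeDensity.piOut d H n))
      Filter.atTop (nhds (1 : ℝ)) ↔ CubeDensity.Layered d H :=
  localDensity_eq_one_iff_layered_general d H
end

section
/- Let G be a simple graph with n vertices, where n is even, and with e edges. Then the number of 3-element subsets of V(G) that induce a subgraph isomorphic to K_{1,2} (the path on 3 vertices) is at most min{ n·C(n/2,2), (e/2)·(n−2) }. -/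
/-!
Encode an induced `K_{1,2}` with centre `a` and leaves `b`, `c` by the two triples `(a, b, c)`,
`(a, c, b)`. Sending such a triple to the leaf `b` together with its neighbour `a` and its
non-neighbour `c` is injective, so twice the count is at most `∑ₓ d(x) (n - 1 - d(x))`, and each
term is at most `m (m - 1) = 2 C(m, 2)` when `n = 2m`. Sending it instead to the edge `ac` together
with the vertex `b` outside it is injective as well, since `b` is adjacent to exactly one end of
`ac`; so twice the count is also at most `e (n - 2)`.
-/

open Finset

theorem mul_le_two_mul_choose_two {d k m : ℕ} (h : d + k + 1 = 2 * m) :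
    d * k ≤ 2 * m.choose 2 := by
  rw [Nat.choose_two_right, Nat.mul_div_cancel' (Nat.even_mul_pred_self m).two_dvd]
  cases m with
  | zero => omega
  | succ j =>
    rw [Nat.add_sub_cancel]
    rcases le_or_gt d j with hd | hd <;> nlinarith

namespace SimpleGraph

variable {V : Type*} [Fintype V] [DecidableEq V] (G : SimpleGraph V) [DecidableRel G.Adj]

/-- Triples `(a, b, c)` spanning an induced `K_{1,2}` with centre `a`, the leaves in either order. -/
def inducedCherries : Finset (V × V × V) :=
  {t | G.Adj t.1 t.2.1 ∧ G.Adj t.1 t.2.2 ∧ ¬ G.Adj t.2.1 t.2.2 ∧ t.2.1 ≠ t.2.2}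

variable {G}

theorem mem_inducedCherries {a b c : V} :
    (a, b, c) ∈ G.inducedCherries ↔ G.Adj a b ∧ G.Adj a c ∧ ¬ G.Adj b c ∧ b ≠ c := by
  simp [inducedCherries]

theorem exists_mem_inducedCherries_of_iso {s : Finset V}
    (e : G.induce (s : Set V) ≃g completeBipartiteGraph (Fin 1) (Fin 2)) :
    ∃ t ∈ G.inducedCherries, s = {t.1, t.2.1, t.2.2} := by
  let v : Fin 1 ⊕ Fin 2 → V := fun i => e.symm i
  have hadj : ∀ i j, G.Adj (v i) (v j) ↔ (completeBipartiteGraph (Fin 1) (Fin 2)).Adj i j :=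
    fun i j => e.symm.map_adj_iff
  refine ⟨(v (.inl 0), v (.inr 0), v (.inr 1)), ?_, ?_⟩
  · rw [mem_inducedCherries, hadj, hadj, hadj]
    refine ⟨by simp, by simp, by simp, fun h => ?_⟩
    simpa using e.symm.injective (Subtype.ext h)
  · ext x
    refine ⟨fun hx => ?_, fun hx => ?_⟩
    · obtain ⟨i, rfl⟩ : ∃ i, v i = x := ⟨e ⟨x, hx⟩, by simp [v]⟩
      rcases i with i | i <;> fin_cases i <;> simp
    · simp only [mem_insert, mem_singleton] at hx
      rcases hx with rfl | rfl | rfl <;> exact (e.symm _).2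

theorem two_mul_card_le_card_inducedCherries {S : Finset (Finset V)}
    (hS : ∀ s ∈ S, ∃ t ∈ G.inducedCherries, s = {t.1, t.2.1, t.2.2}) :
    2 * #S ≤ #G.inducedCherries := by
  have := card_mul_le_card_mul (fun s (t : V × V × V) => s = {t.1, t.2.1, t.2.2})
    (m := 2) (n := 1) (s := S) (t := G.inducedCherries) ?_ ?_
  · linarith
  · rintro s hs
    obtain ⟨⟨a, b, c⟩, ht, rfl⟩ := hS s hs
    obtain ⟨hab, hac, hbc, hne⟩ := mem_inducedCherries.1 ht
    calc 2 = #{(a, b, c), (a, c, b)} := (card_pair (by simp [hne])).symm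
      _ ≤ _ := card_le_card fun t ht' => by
        simp only [mem_insert, mem_singleton] at ht'
        rcases ht' with rfl | rfl
        · simp [bipartiteAbove, ht]
        · exact mem_filter.2 ⟨mem_inducedCherries.2 ⟨hac, hab, fun h => hbc h.symm, hne.symm⟩,
            by rw [pair_comm]⟩
  · intro t _
    simp only [bipartiteBelow, filter_eq']
    split_ifs <;> simp

variable (G)

theorem card_inducedCherries_le_sum :
    #G.inducedCherries ≤ ∑ x, G.degree x * #(insert x (G.neighborFinset x))ᶜ := by
  calc #G.inducedCherries
      ≤ #(univ.sigma fun x => G.neighborFinset x ×ˢ (insert x (G.neighborFinset x))ᶜ) := by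
        refine card_le_card_of_injOn (fun t => ⟨t.2.1, (t.1, t.2.2)⟩) ?_ ?_
        · rintro ⟨a, b, c⟩ ht
          obtain ⟨hab, hac, hbc, hne⟩ := mem_inducedCherries.1 ht
          simp [hab.symm, hbc, hne.symm]
        · rintro ⟨a, b, c⟩ - ⟨a', b', c'⟩ - h
          simp_all
    _ = _ := by simp [card_sigma, card_product]

theorem card_inducedCherries_le_card_mul {m : ℕ} (hm : Fintype.card V = 2 * m) :
    #G.inducedCherries ≤ Fintype.card V * (2 * m.choose 2) := by
  calc #G.inducedCherries ≤ ∑ x, G.degree x * #(insert x (G.neighborFinset x))ᶜ :=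
        G.card_inducedCherries_le_sum
    _ ≤ ∑ _x : V, 2 * m.choose 2 := sum_le_sum fun x _ => mul_le_two_mul_choose_two ?_
    _ = Fintype.card V * (2 * m.choose 2) := by rw [sum_const, card_univ, smul_eq_mul]
  rw [← hm, ← card_compl_add_card (insert x (G.neighborFinset x)),
    card_insert_of_notMem (by simp), card_neighborFinset_eq_degree]
  ring

/-- `#inducedCherries ≤ e (n - 2)`, stated without truncated subtraction. -/
theorem card_inducedCherries_add_two_mul_le :
    #G.inducedCherries + 2 * #G.edgeFinset ≤ #G.edgeFinset * Fintype.card V := by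
  have hcompl : ∀ e ∈ G.edgeFinset, #e.toFinsetᶜ + 2 = Fintype.card V := fun e he => by
    rw [← Sym2.card_toFinset_of_not_isDiag e (G.not_isDiag_of_mem_edgeSet (mem_edgeFinset.1 he)),
      card_compl_add_card]
  have hinj : #G.inducedCherries ≤ #(G.edgeFinset.sigma fun e => e.toFinsetᶜ) := by
    refine card_le_card_of_injOn (fun t => ⟨s(t.1, t.2.2), t.2.1⟩) ?_ ?_
    · rintro ⟨a, b, c⟩ ht
      obtain ⟨hab, hac, hbc, hne⟩ := mem_inducedCherries.1 ht
      simp [hac, hab.ne', hne]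
    · rintro ⟨a, b, c⟩ ht ⟨a', b', c'⟩ ht' h
      obtain ⟨hab, -, hbc, -⟩ := mem_inducedCherries.1 ht
      simp only [Sigma.mk.injEq, Sym2.eq_iff, heq_eq_eq] at h
      obtain ⟨⟨rfl, rfl⟩ | ⟨rfl, rfl⟩, rfl⟩ := h
      · rfl
      · exact absurd hab.symm (mem_inducedCherries.1 ht').2.2.1
  calc #G.inducedCherries + 2 * #G.edgeFinset
      ≤ ∑ e ∈ G.edgeFinset, (#e.toFinsetᶜ + 2) := by
        rw [sum_add_distrib, sum_const, smul_eq_mul, ← card_sigma, mul_comm]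
        exact Nat.add_le_add_right hinj _
    _ = #G.edgeFinset * Fintype.card V := by rw [sum_congr rfl hcompl, sum_const, smul_eq_mul]

end SimpleGraph

/-- A graph with `n` vertices (`n` even) and `e` edges has at most
`min{n·C(n/2,2), (e/2)·(n−2)}` induced copies of `K_{1,2}`. -/
theorem count_induced_K12_le {V : Type} [Fintype V] (G : SimpleGraph V)
    (hV : Even (Fintype.card V)) :
    (Nat.card {s : Finset V // s.card = 3 ∧
        Nonempty (G.induce (s : Set V) ≃g completeBipartiteGraph (Fin 1) (Fin 2))} : ℝ) ≤
      min ((Fintype.card V : ℝ) * ((Fintype.card V / 2 : ℕ).choose 2 : ℕ))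
        ((Nat.card G.edgeSet : ℝ) / 2 * ((Fintype.card V : ℝ) - 2)) := by
  classical
  obtain ⟨m, hm⟩ := hV
  rw [← two_mul] at hm
  rw [hm, Nat.mul_div_cancel_left m two_pos, Nat.card_eq_fintype_card, Fintype.card_subtype,
    Nat.card_eq_fintype_card, ← G.edgeFinset_card]
  set S : Finset (Finset V) := {s | s.card = 3 ∧
    Nonempty (G.induce (s : Set V) ≃g completeBipartiteGraph (Fin 1) (Fin 2))}
  have hS : 2 * #S ≤ #G.inducedCherries := G.two_mul_card_le_card_inducedCherries fun s hs => by
    obtain ⟨-, ⟨e⟩⟩ := (mem_filter.1 hs).2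
    exact G.exists_mem_inducedCherries_of_iso e
  have hdeg := G.card_inducedCherries_le_card_mul hm
  have hedge := G.card_inducedCherries_add_two_mul_le
  rw [hm] at hdeg hedge
  refine le_min ?_ ?_
  · have : (2 * #S : ℝ) ≤ (2 * m : ℕ) * (2 * m.choose 2 : ℕ) := by exact_mod_cast hS.trans hdeg
    push_cast at this ⊢
    linarith
  · have : (2 * #S + 2 * #G.edgeFinset : ℝ) ≤ #G.edgeFinset * (2 * m : ℕ) := by
      exact_mod_cast (Nat.add_le_add_right hS _).trans hedge
    push_cast at this ⊢
    linarith
end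

section
/- Let G be a simple graph with n vertices, where n is even, and with e edges. Then the number of 4-element subsets of V(G) that induce a subgraph isomorphic to K_{2,2} (the 4-cycle) is at most min{ C(n/2,2)^2, (e/4)·((n−2)^2/4) }. -/
/-!
Count induced 4-cycles through their ordered edges. An induced 4-cycle `s` contains exactly 8
ordered adjacent pairs `(u, x)`, and for each of them `s = {u, x, v, y}`, where `u x v` and `x u y`
are induced paths. So if `a(u, x)` is the number of ends `v` of induced paths `u x v`, then
`8 · #C₄ ≤ ∑ a(u, x) a(x, u)` over the ordered edges `(u, x)`.

The ends of `u x v` and of `x u y` are distinct from each other and from `u, x`, so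
`a(u, x) + a(x, u) ≤ n - 2`, whence `4 a(u, x) a(x, u) ≤ (n - 2)(a(u, x) + a(x, u)) ≤ (n - 2)²`.
Summing the last bound over the `2e` ordered edges gives the edge bound. For the other one,
`v` is a non-neighbour of `u`, so `∑ₓ a(u, x) ≤ d(u)(n - 1 - d(u))`, which is at most
`n(n - 2)/4` when `n` is even; summing over `u` and using the middle inequality gives
`8 · #C₄ ≤ n²(n - 2)²/8`.
-/

open Finset

instance (α β : Type*) : DecidableRel (completeBipartiteGraph α β).Adj := fun v w =>
  inferInstanceAs (Decidable (v.isLeft ∧ w.isRight ∨ v.isRight ∧ w.isLeft))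

local notation "K₂₂" => completeBipartiteGraph (Fin 2) (Fin 2)

lemma four_mul_mul_sub_one_sub_le {n : ℕ} (hn : Even n) (d : ℕ) :
    4 * (d * (n - 1 - d)) ≤ n * (n - 2) := by
  rcases le_or_gt n (d + 1) with hd | hd
  · rw [Nat.sub_sub, Nat.sub_eq_zero_of_le (by omega)]
    simp
  obtain ⟨m, rfl⟩ : ∃ m, n = d + m + 1 := ⟨n - 1 - d, by omega⟩
  -- `d + m + 1` is even, so `d ≠ m` and `(d + m)² - 4 d m = (d - m)² ≥ 1`
  have hdm : (d : ℤ) - m ≤ -1 ∨ 1 ≤ (d : ℤ) - m := by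
    rcases hn with ⟨k, hk⟩
    omega
  rw [show d + m + 1 - 1 - d = m by omega]
  zify [show 2 ≤ d + m + 1 by omega]
  rcases hdm with h | h <;> nlinarith

lemma sq_mul_sub_two_sq_eq_of_even {n : ℕ} (hn : Even n) :
    n ^ 2 * (n - 2) ^ 2 = 64 * (n / 2).choose 2 ^ 2 := by
  obtain ⟨k, rfl⟩ := hn
  have hchoose : 2 * k.choose 2 = k * (k - 1) := by
    rw [Nat.choose_two_right]
    exact Nat.mul_div_cancel' (Nat.even_mul_pred_self k).two_dvd
  rw [show (k + k) / 2 = k by omega, show k + k - 2 = 2 * (k - 1) by omega]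
  calc (k + k) ^ 2 * (2 * (k - 1)) ^ 2 = 16 * (k * (k - 1)) ^ 2 := by ring
    _ = 64 * k.choose 2 ^ 2 := by rw [← hchoose]; ring

namespace SimpleGraph

variable {V : Type*} [Fintype V] (G : SimpleGraph V) [DecidableRel G.Adj]

def adjPairs : Finset (V × V) := {p | G.Adj p.1 p.2}

variable {G} in
@[simp]
lemma mem_adjPairs {p : V × V} : p ∈ G.adjPairs ↔ G.Adj p.1 p.2 := by
  simp [adjPairs]

lemma sum_adjPairs_eq_sum_sum_neighborFinset {M : Type*} [AddCommMonoid M] (f : V × V → M) :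
    ∑ p ∈ G.adjPairs, f p = ∑ u, ∑ x ∈ G.neighborFinset u, f (u, x) := by
  simp [adjPairs, sum_filter, Fintype.sum_prod_type, neighborFinset_eq_filter]

lemma sum_adjPairs_swap {M : Type*} [AddCommMonoid M] (f : V × V → M) :
    ∑ p ∈ G.adjPairs, f p.swap = ∑ p ∈ G.adjPairs, f p :=
  sum_nbij' Prod.swap Prod.swap (fun p hp => by simpa [G.adj_comm] using hp)
    (fun p hp => by simpa [G.adj_comm] using hp) (fun _ _ => rfl) (fun _ _ => rfl) (fun _ _ => rfl)

lemma card_adjPairs : #G.adjPairs = 2 * #G.edgeFinset := by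
  rw [card_eq_sum_ones, sum_adjPairs_eq_sum_sum_neighborFinset, ← sum_degrees_eq_twice_card_edges]
  simp

variable [DecidableEq V]

def inducedPathEnds (u x : V) : Finset V := (G.neighborFinset x \ G.neighborFinset u).erase u

variable {G} in
lemma mem_inducedPathEnds {u x w : V} :
    w ∈ G.inducedPathEnds u x ↔ G.Adj x w ∧ ¬G.Adj u w ∧ w ≠ u := by
  simp only [inducedPathEnds, mem_erase, ne_eq, mem_sdiff, mem_neighborFinset]
  tauto

lemma card_inducedPathEnds_add_card_add_two_le {u x : V} (h : G.Adj u x) :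
    #(G.inducedPathEnds u x) + #(G.inducedPathEnds x u) + 2 ≤ Fintype.card V := by
  have hdisj : Disjoint (G.inducedPathEnds u x) (G.inducedPathEnds x u) := by
    rw [Finset.disjoint_left]
    intro w hux hxu
    exact (mem_inducedPathEnds.1 hux).2.1 (mem_inducedPathEnds.1 hxu).1
  have hsub : G.inducedPathEnds u x ∪ G.inducedPathEnds x u ⊆ {u, x}ᶜ := by
    intro w hw
    simp only [mem_union, mem_inducedPathEnds] at hw
    simp only [mem_compl, mem_insert, mem_singleton, not_or]
    rcases hw with ⟨hxw, -, hwu⟩ | ⟨huw, -, hwx⟩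
    exacts [⟨hwu, hxw.ne'⟩, ⟨huw.ne', hwx⟩]
  have hcard := card_le_card hsub
  rw [card_union_of_disjoint hdisj, card_compl, card_pair h.ne] at hcard
  have := card_le_univ ({u, x} : Finset V)
  rw [card_pair h.ne] at this
  omega

lemma card_inducedPathEnds_le (u x : V) :
    #(G.inducedPathEnds u x) ≤ Fintype.card V - 1 - G.degree u := by
  have hsub : G.inducedPathEnds u x ⊆ (insert u (G.neighborFinset u))ᶜ := by
    intro w hw
    rw [mem_inducedPathEnds] at hw
    simp [hw.2.1, hw.2.2]
  calc #(G.inducedPathEnds u x) ≤ _ := card_le_card hsub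
    _ = _ := by
      rw [card_compl, card_insert_of_notMem (by simp), card_neighborFinset_eq_degree, Nat.sub_sub,
        add_comm]

lemma sum_card_inducedPathEnds_le :
    ∑ p ∈ G.adjPairs, #(G.inducedPathEnds p.1 p.2) ≤
      ∑ u, G.degree u * (Fintype.card V - 1 - G.degree u) := by
  rw [sum_adjPairs_eq_sum_sum_neighborFinset]
  refine sum_le_sum fun u _ => ?_
  rw [← card_neighborFinset_eq_degree, ← smul_eq_mul]
  exact sum_le_card_nsmul _ _ _ fun x _ => G.card_inducedPathEnds_le u x

lemma two_mul_sum_le_card_edgeFinset_mul :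
    2 * ∑ p ∈ G.adjPairs, #(G.inducedPathEnds p.1 p.2) * #(G.inducedPathEnds p.2 p.1) ≤
      #G.edgeFinset * (Fintype.card V - 2) ^ 2 := by
  have hpair : ∑ p ∈ G.adjPairs,
      4 * (#(G.inducedPathEnds p.1 p.2) * #(G.inducedPathEnds p.2 p.1)) ≤
        ∑ p ∈ G.adjPairs, (Fintype.card V - 2) ^ 2 := by
    refine sum_le_sum fun p hp => ?_
    have hle := G.card_inducedPathEnds_add_card_add_two_le (mem_adjPairs.1 hp)
    calc _ ≤ (#(G.inducedPathEnds p.1 p.2) + #(G.inducedPathEnds p.2 p.1)) ^ 2 := by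
          rw [← mul_assoc]; exact four_mul_le_sq_add _ _
      _ ≤ _ := by gcongr; omega
  rw [← mul_sum, sum_const, card_adjPairs, smul_eq_mul] at hpair
  linarith

lemma eight_mul_sum_le_of_even (hV : Even (Fintype.card V)) :
    8 * ∑ p ∈ G.adjPairs, #(G.inducedPathEnds p.1 p.2) * #(G.inducedPathEnds p.2 p.1) ≤
      Fintype.card V ^ 2 * (Fintype.card V - 2) ^ 2 := by
  set n := Fintype.card V
  set a : V × V → ℕ := fun p => #(G.inducedPathEnds p.1 p.2)
  have hpair : ∑ p ∈ G.adjPairs, 4 * (a p * a p.swap) ≤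
      (n - 2) * ∑ p ∈ G.adjPairs, (a p + a p.swap) := by
    rw [mul_sum]
    refine sum_le_sum fun p hp => ?_
    have hle : a p + a p.swap + 2 ≤ n :=
      G.card_inducedPathEnds_add_card_add_two_le (mem_adjPairs.1 hp)
    calc _ ≤ (a p + a p.swap) ^ 2 := by rw [← mul_assoc]; exact four_mul_le_sq_add _ _
      _ ≤ _ := by rw [sq, mul_comm]; gcongr; omega
  have hsym : ∑ p ∈ G.adjPairs, (a p + a p.swap) = 2 * ∑ p ∈ G.adjPairs, a p := by
    rw [sum_add_distrib, G.sum_adjPairs_swap a, two_mul]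
  have hdeg : 4 * ∑ u, G.degree u * (n - 1 - G.degree u) ≤ n * (n * (n - 2)) := by
    rw [mul_sum]
    simpa using sum_le_card_nsmul univ _ _ fun u _ => four_mul_mul_sub_one_sub_le hV (G.degree u)
  rw [← mul_sum, hsym] at hpair
  calc 8 * ∑ p ∈ G.adjPairs, a p * a p.swap
      = 2 * (4 * ∑ p ∈ G.adjPairs, a p * a p.swap) := by ring
    _ ≤ 2 * ((n - 2) * (2 * ∑ p ∈ G.adjPairs, a p)) := by gcongr
    _ ≤ 2 * ((n - 2) * (2 * ∑ u, G.degree u * (n - 1 - G.degree u))) := by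
      gcongr
      exact G.sum_card_inducedPathEnds_le
    _ = (n - 2) * (4 * ∑ u, G.degree u * (n - 1 - G.degree u)) := by ring
    _ ≤ (n - 2) * (n * (n * (n - 2))) := by gcongr
    _ = n ^ 2 * (n - 2) ^ 2 := by ring

lemma card_adjPairs_completeBipartiteGraph_two_two : #(K₂₂).adjPairs = 8 := by
  decide

lemma card_adjPairs_le_card_filter_of_embedding {W : Type*} [Fintype W] {H : SimpleGraph W}
    [DecidableRel H.Adj] (φ : H ↪g G) {s : Finset V} (hs : ∀ w, φ w ∈ s) :
    #H.adjPairs ≤ #{p ∈ G.adjPairs | p.1 ∈ s ∧ p.2 ∈ s} :=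
  card_le_card_of_injOn (Prod.map φ φ) (fun p hp => by simp_all)
    (φ.injective.prodMap φ.injective).injOn

lemma exists_eq_of_induce_iso_completeBipartiteGraph {s : Finset V}
    (e : G.induce (s : Set V) ≃g K₂₂) {u x : V} (hu : u ∈ s) (hx : x ∈ s) (h : G.Adj u x) :
    ∃ v ∈ G.inducedPathEnds u x, ∃ y ∈ G.inducedPathEnds x u, s = {u, x, v, y} := by
  have adj_iff (i j) : G.Adj (e.symm i) (e.symm j) ↔ (K₂₂).Adj i j := e.symm.map_adj_iff
  have coe_inj (i j) : (e.symm i : V) = e.symm j ↔ i = j := by simp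
  obtain ⟨i, rfl⟩ : ∃ i, (e.symm i : V) = u := ⟨e ⟨u, hu⟩, by simp⟩
  obtain ⟨j, rfl⟩ : ∃ j, (e.symm j : V) = x := ⟨e ⟨x, hx⟩, by simp⟩
  have hK₂₂ : ∀ i j : Fin 2 ⊕ Fin 2, (K₂₂).Adj i j → ∃ k l, (K₂₂).Adj j k ∧ ¬(K₂₂).Adj i k ∧
      k ≠ i ∧ (K₂₂).Adj i l ∧ ¬(K₂₂).Adj j l ∧ l ≠ j ∧ ∀ m, m = i ∨ m = j ∨ m = k ∨ m = l := by
    decide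
  obtain ⟨k, l, hjk, hik, hki, hil, hjl, hlj, hall⟩ := hK₂₂ i j ((adj_iff i j).1 h)
  refine ⟨e.symm k, ?_, e.symm l, ?_, ?_⟩
  · simp only [mem_inducedPathEnds, adj_iff, ne_eq, coe_inj]
    exact ⟨hjk, hik, hki⟩
  · simp only [mem_inducedPathEnds, adj_iff, ne_eq, coe_inj]
    exact ⟨hil, hjl, hlj⟩
  ext w
  refine ⟨fun hw => ?_, fun hw => ?_⟩
  · obtain ⟨m, rfl⟩ : ∃ m, (e.symm m : V) = w := ⟨e ⟨w, hw⟩, by simp⟩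
    rcases hall m with rfl | rfl | rfl | rfl <;> simp
  · simp only [mem_insert, mem_singleton] at hw
    rcases hw with rfl | rfl | rfl | rfl <;> exact (e.symm _).2

lemma card_filter_mem_le_mul {𝒮 : Finset (Finset V)}
    (h𝒮 : ∀ s ∈ 𝒮, Nonempty (G.induce (s : Set V) ≃g K₂₂)) {u x : V} (h : G.Adj u x) :
    #{s ∈ 𝒮 | u ∈ s ∧ x ∈ s} ≤ #(G.inducedPathEnds u x) * #(G.inducedPathEnds x u) :=
  calc #{s ∈ 𝒮 | u ∈ s ∧ x ∈ s}
      ≤ #((G.inducedPathEnds u x ×ˢ G.inducedPathEnds x u).image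
          fun q => ({u, x, q.1, q.2} : Finset V)) := by
        refine card_le_card fun s hs => ?_
        obtain ⟨hs𝒮, hu, hx⟩ := mem_filter.1 hs
        obtain ⟨e⟩ := h𝒮 s hs𝒮
        obtain ⟨v, hv, y, hy, rfl⟩ := G.exists_eq_of_induce_iso_completeBipartiteGraph e hu hx h
        exact mem_image.2 ⟨(v, y), mem_product.2 ⟨hv, hy⟩, rfl⟩
    _ ≤ _ := card_image_le.trans (card_product _ _).le

lemma eight_mul_card_le_sum {𝒮 : Finset (Finset V)}
    (h𝒮 : ∀ s ∈ 𝒮, Nonempty (G.induce (s : Set V) ≃g K₂₂)) :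
    8 * #𝒮 ≤ ∑ p ∈ G.adjPairs, #(G.inducedPathEnds p.1 p.2) * #(G.inducedPathEnds p.2 p.1) :=
  calc 8 * #𝒮 = ∑ s ∈ 𝒮, #(K₂₂).adjPairs := by
        rw [sum_const, smul_eq_mul, card_adjPairs_completeBipartiteGraph_two_two, mul_comm]
    _ ≤ ∑ s ∈ 𝒮, #{p ∈ G.adjPairs | p.1 ∈ s ∧ p.2 ∈ s} := sum_le_sum fun s hs => by
        obtain ⟨e⟩ := h𝒮 s hs
        exact G.card_adjPairs_le_card_filter_of_embedding
          ((Embedding.induce _).comp e.symm.toEmbedding) fun i => (e.symm i).2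
    _ = ∑ p ∈ G.adjPairs, #{s ∈ 𝒮 | p.1 ∈ s ∧ p.2 ∈ s} :=
        sum_card_bipartiteAbove_eq_sum_card_bipartiteBelow _
    _ ≤ _ := sum_le_sum fun p hp => G.card_filter_mem_le_mul h𝒮 (mem_adjPairs.1 hp)

lemma sixteen_mul_card_le_card_edgeFinset_mul {𝒮 : Finset (Finset V)}
    (h𝒮 : ∀ s ∈ 𝒮, Nonempty (G.induce (s : Set V) ≃g K₂₂)) :
    16 * #𝒮 ≤ #G.edgeFinset * (Fintype.card V - 2) ^ 2 := by
  have := G.eight_mul_card_le_sum h𝒮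
  have := G.two_mul_sum_le_card_edgeFinset_mul
  linarith

lemma card_le_choose_two_sq {𝒮 : Finset (Finset V)} (hV : Even (Fintype.card V))
    (h𝒮 : ∀ s ∈ 𝒮, Nonempty (G.induce (s : Set V) ≃g K₂₂)) :
    #𝒮 ≤ (Fintype.card V / 2).choose 2 ^ 2 := by
  have := G.eight_mul_card_le_sum h𝒮
  have := G.eight_mul_sum_le_of_even hV
  rw [sq_mul_sub_two_sq_eq_of_even hV] at this
  linarith

end SimpleGraph

/-- A graph with `n` vertices (`n` even) and `e` edges has at most
`min{C(n/2,2)², (e/4)·((n−2)²/4)}` induced copies of `K_{2,2}`. -/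
theorem count_induced_K22_le {V : Type} [Fintype V] (G : SimpleGraph V)
    (hV : Even (Fintype.card V)) :
    (Nat.card {s : Finset V // s.card = 4 ∧
        Nonempty (G.induce (s : Set V) ≃g completeBipartiteGraph (Fin 2) (Fin 2))} : ℝ) ≤
      min ((((Fintype.card V / 2 : ℕ).choose 2 : ℕ) : ℝ) ^ 2)
        ((Nat.card G.edgeSet : ℝ) / 4 * (((Fintype.card V : ℝ) - 2) ^ 2 / 4)) := by
  classical
  set 𝒮 : Finset (Finset V) :=
    {s | s.card = 4 ∧ Nonempty (G.induce (s : Set V) ≃g completeBipartiteGraph (Fin 2) (Fin 2))}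
  have h𝒮 : ∀ s ∈ 𝒮, Nonempty (G.induce (s : Set V) ≃g completeBipartiteGraph (Fin 2) (Fin 2)) :=
    fun s hs => (mem_filter.1 hs).2.2
  rw [Nat.card_eq_fintype_card, Fintype.card_subtype, Nat.card_eq_fintype_card,
    ← SimpleGraph.edgeFinset_card, le_min_iff]
  refine ⟨by exact_mod_cast G.card_le_choose_two_sq hV h𝒮, ?_⟩
  have h16 := G.sixteen_mul_card_le_card_edgeFinset_mul h𝒮
  rcases le_or_gt 2 (Fintype.card V) with hn | hn
  · have h16' : ((16 * #𝒮 : ℕ) : ℝ) ≤ ((#G.edgeFinset * (Fintype.card V - 2) ^ 2 : ℕ) : ℝ) :=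
      mod_cast h16
    push_cast [Nat.cast_sub hn] at h16'
    linarith
  · rw [Nat.sub_eq_zero_of_le hn.le] at h16
    have : #𝒮 = 0 := by simpa using h16
    rw [this, Nat.cast_zero]
    positivity
end

section
/- If n is an even positive integer and x, y, z are nonnegative integers with x + y + z = n, then C(x,2)·C(y,2) + C(x,2)·C(z,2) + C(y,2)·C(z,2) ≤ C(n/2,2)^2, and this maximum value C(n/2,2)^2 is attained (e.g., when x = y = n/2 and z = 0). -/
/-!
If `x` is the largest part, then `C(y,2) C(z,2) ≤ C(x,2) y z`, so the sum is at most
`C(x,2) (C(y,2) + C(z,2) + y z) = C(x,2) C(y+z,2)`. For `a + b = 2m`, writing `p = a b` gives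
`4 C(a,2) C(b,2) = p (p - 2m + 1)`, and `(m(m-1))² - p (p - 2m + 1) = (m² - p)((m-1)² + p) ≥ 0`
because `0 ≤ p ≤ m²`; hence `C(x,2) C(y+z,2) ≤ C(m,2)²`.
-/

theorem mul_sub_one_mul_mul_sub_one_le {R : Type*} [CommRing R] [LinearOrder R]
    [IsStrictOrderedRing R] {a b m : R} (hab : 0 ≤ a * b) (h : a + b = 2 * m) :
    a * (a - 1) * (b * (b - 1)) ≤ (m * (m - 1)) ^ 2 := by
  obtain rfl : b = 2 * m - a := by linear_combination h
  nlinarith [mul_nonneg (sq_nonneg (a - m)) (add_nonneg (sq_nonneg (m - 1)) hab)]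

namespace Nat

theorem choose_two_add (a b : ℕ) : (a + b).choose 2 = a.choose 2 + b.choose 2 + a * b := by
  have h : ((a + b).choose 2 : ℚ) = a.choose 2 + b.choose 2 + a * b := by
    push_cast [cast_choose_two]
    ring
  exact_mod_cast h

theorem choose_two_mul_choose_two_le {a b m : ℕ} (h : a + b = 2 * m) :
    a.choose 2 * b.choose 2 ≤ m.choose 2 ^ 2 := by
  have hR := mul_sub_one_mul_mul_sub_one_le (R := ℚ) (a := a) (b := b) (m := m)
    (by positivity) (by exact_mod_cast h)
  have hQ : (a.choose 2 * b.choose 2 : ℚ) ≤ m.choose 2 ^ 2 := by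
    push_cast [cast_choose_two]
    linarith
  exact_mod_cast hQ

theorem choose_two_le_mul_of_le {y z : ℕ} (h : z ≤ y) : z.choose 2 ≤ y * z := by
  calc z.choose 2 ≤ z * (z - 1) := by rw [choose_two_right]; exact div_le_self _ _
    _ ≤ y * z := by rw [mul_comm]; exact Nat.mul_le_mul_right z (by omega)

theorem choose_two_mul_choose_two_le_choose_two_mul {x y z : ℕ} (hy : y ≤ x) (hz : z ≤ x) :
    y.choose 2 * z.choose 2 ≤ x.choose 2 * (y * z) := by
  wlog hzy : z ≤ y generalizing y z
  · simpa only [mul_comm] using this hz hy (by omega)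
  exact Nat.mul_le_mul (choose_le_choose 2 hy) (choose_two_le_mul_of_le hzy)

end Nat

open Nat in
theorem sum_choose_two_products_le_of_le {x y z m : ℕ} (hy : y ≤ x) (hz : z ≤ x)
    (h : x + y + z = 2 * m) :
    x.choose 2 * y.choose 2 + x.choose 2 * z.choose 2 + y.choose 2 * z.choose 2 ≤
      m.choose 2 ^ 2 :=
  calc x.choose 2 * y.choose 2 + x.choose 2 * z.choose 2 + y.choose 2 * z.choose 2
      ≤ x.choose 2 * y.choose 2 + x.choose 2 * z.choose 2 + x.choose 2 * (y * z) :=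
        Nat.add_le_add_left (choose_two_mul_choose_two_le_choose_two_mul hy hz) _
    _ = x.choose 2 * (y + z).choose 2 := by rw [choose_two_add]; ring
    _ ≤ m.choose 2 ^ 2 := choose_two_mul_choose_two_le (by omega)

theorem sum_choose_two_products_le {x y z m : ℕ} (h : x + y + z = 2 * m) :
    x.choose 2 * y.choose 2 + x.choose 2 * z.choose 2 + y.choose 2 * z.choose 2 ≤
      m.choose 2 ^ 2 := by
  obtain hx | hy | hz : (y ≤ x ∧ z ≤ x) ∨ (x ≤ y ∧ z ≤ y) ∨ (x ≤ z ∧ y ≤ z) := by omega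
  · exact sum_choose_two_products_le_of_le hx.1 hx.2 h
  · calc _ = y.choose 2 * x.choose 2 + y.choose 2 * z.choose 2 + x.choose 2 * z.choose 2 := by
          ring
      _ ≤ _ := sum_choose_two_products_le_of_le hy.1 hy.2 (by omega)
  · calc _ = z.choose 2 * x.choose 2 + z.choose 2 * y.choose 2 + x.choose 2 * y.choose 2 := by
          ring
      _ ≤ _ := sum_choose_two_products_le_of_le hz.1 hz.2 (by omega)

theorem max_sum_products_choose_two_general (n : ℕ) (hn : Even n) :
    (∀ x y z : ℕ, x + y + z = n →
      x.choose 2 * y.choose 2 + x.choose 2 * z.choose 2 + y.choose 2 * z.choose 2 ≤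
        (n / 2).choose 2 ^ 2) ∧
    (∃ x y z : ℕ, x + y + z = n ∧
      x.choose 2 * y.choose 2 + x.choose 2 * z.choose 2 + y.choose 2 * z.choose 2 =
        (n / 2).choose 2 ^ 2) := by
  obtain ⟨m, rfl⟩ := hn
  rw [show (m + m) / 2 = m by omega]
  exact ⟨fun x y z h => sum_choose_two_products_le (by omega), m, m, 0, rfl, by simp [sq]⟩

/-- For an even positive integer `n`, among nonnegative integers `x, y, z` with
`x + y + z = n`, the quantity `C(x,2)C(y,2) + C(x,2)C(z,2) + C(y,2)C(z,2)` is at most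
`C(n/2,2)²`, and this maximum value is attained. -/
theorem max_sum_products_choose_two (n : ℕ) (hn : Even n) (hpos : 0 < n) :
    (∀ x y z : ℕ, x + y + z = n →
      x.choose 2 * y.choose 2 + x.choose 2 * z.choose 2 + y.choose 2 * z.choose 2 ≤
        (n / 2).choose 2 ^ 2) ∧
    (∃ x y z : ℕ, x + y + z = n ∧
      x.choose 2 * y.choose 2 + x.choose 2 * z.choose 2 + y.choose 2 * z.choose 2 =
        (n / 2).choose 2 ^ 2) :=
  max_sum_products_choose_two_general n hn
end

section
/- Let W_10 ⊆ {0,1}^3 be the configuration W_10 = {(0,0,0),(0,0,1),(1,1,1)} in Q_3 (an edge of Q_3 together with the vertex antipodal to one of its endpoints). Then λ(W_10,3) ≥ 5/12. -/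
open Filter

/-!
For `S ⊆ Q_k`, the blow-up `blowUp m S ⊆ Q_{k(m+1)}` consists of the vertices whose parities on
`k` blocks of `m + 1` coordinates form a vertex of `S`. An `H`-good sub-`d`-cube of `S` with flip
coordinates `e t` lifts to `(m+1)^d 2^{km}` distinct `H`-good sub-`d`-cubes of the blow-up: pick a
flip coordinate in each block `e t` and the free bits of all blocks; the block parities of the
lifted cube are then the vertices of the original cube shifted by a fixed vector, and translations
preserve exact copies. Since `C(k(m+1), d) ≤ (k(m+1))^d / d!`, the fraction of good sub-cubes of
the blow-up is at least `N d! / (k^d 2^{k-d})` when `S` has `N` good sub-cubes.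

For `W₁₀`, the seed `w10Seed ⊆ Q_6` (24 vertices) has `120` of its `160` sub-3-cubes `W₁₀`-good,
found by exhaustive computation, so `ex(W₁₀, 3, 6(m+1)) ≥ 120 · 3! / (6^3 · 2^3) = 5/12`.
Finally `ex(H, d, n)` is nonincreasing in `n ≥ d` (averaging over the `2(n+1)` facets `x_j = b`
of `Q_{n+1}` counts every sub-`d`-cube exactly `n + 1 - d` times), so the limit exists and
`ex(W₁₀, 3, n) ≥ ex(W₁₀, 3, 6(n+1)) ≥ 5/12` for all `n ≥ 3`.
-/

open Finset Filter

namespace CubeDensity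

variable {d n k m : ℕ}

/-! ### Sub-cubes given by their flip maps -/

lemma autMap_apply (σ : Equiv.Perm (Fin d)) (ε v : Fin d → Bool) :
    autMap d σ ε v = v ∘ ⇑σ⁻¹ + ε := rfl

lemma ExactCopy.image_add {H K : Set (Fin d → Bool)} (h : ExactCopy d H K) (ρ : Fin d → Bool) :
    ExactCopy d H ((· + ρ) '' K) := by
  obtain ⟨σ, ε, rfl⟩ := h
  refine ⟨σ, ε + ρ, ?_⟩
  rw [Set.image_image]
  simp only [autMap_apply, add_assoc]
  rfl

/-- The vertex of the sub-`d`-cube with flip map `e` and base point `g` with coordinates `u`;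
in `Bool`, `+` is `xor`. -/
def vertexAt (e : Fin d → Fin n) (g : Fin n → Bool) (u : Fin d → Bool) : Fin n → Bool :=
  g + ∑ t, Pi.single (e t) (u t)

lemma vertexAt_apply_self {e : Fin d → Fin n} (he : Function.Injective e) (g : Fin n → Bool)
    (u : Fin d → Bool) (t : Fin d) : vertexAt e g u (e t) = g (e t) + u t := by
  simp [vertexAt, Finset.sum_apply, Pi.single_apply, he.eq_iff]

lemma vertexAt_apply_of_notMem_range {e : Fin d → Fin n} (g : Fin n → Bool) (u : Fin d → Bool)
    {j : Fin n} (hj : j ∉ Set.range e) : vertexAt e g u j = g j := by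
  simp only [Set.mem_range, not_exists] at hj
  simp [vertexAt, Finset.sum_apply, fun t => Ne.symm (hj t)]

lemma vertexAt_add (e : Fin d → Fin n) (g : Fin n → Bool) (u ρ : Fin d → Bool) :
    vertexAt e g (u + ρ) = vertexAt e g ρ + ∑ t, Pi.single (e t) (u t) := by
  simp only [vertexAt, Pi.add_apply, Pi.single_add, sum_add_distrib]
  abel

lemma embed_eq_vertexAt {F : Finset (Fin n)} (hF : F.card = d) {g : Fin n → Bool}
    (hg : ∀ i ∈ F, g i = false) (u : Fin d → Bool) :
    embed F hF g u = vertexAt (F.orderEmbOfFin hF) g u := by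
  funext i
  by_cases hi : i ∈ F
  · set t := (F.orderIsoOfFin hF).symm ⟨i, hi⟩
    have hit : F.orderEmbOfFin hF t = i := by
      rw [← coe_orderIsoOfFin_apply, OrderIso.apply_symm_apply]
    rw [embed, dif_pos hi]
    conv_rhs => rw [← hit, vertexAt_apply_self (F.orderEmbOfFin hF).injective, hit, hg i hi]
    exact (zero_add _).symm
  · rw [embed, dif_neg hi, vertexAt_apply_of_notMem_range]
    simpa using hi

lemma orderEmbOfFin_image_univ {e : Fin d → Fin n} (he : StrictMono e)
    (h : (univ.image e).card = d) : ⇑((univ.image e).orderEmbOfFin h) = e :=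
  (orderEmbOfFin_unique h (fun t => mem_image_of_mem e (mem_univ t)) he).symm

/-- The `H`-good sub-`d`-cubes of `S`, each given by its strictly increasing flip map and its
base point, which vanishes on the flip coordinates. -/
def goodReps (d : ℕ) (H : Set (Fin d → Bool)) (S : Set (Fin n → Bool)) :
    Set ((Fin d → Fin n) × (Fin n → Bool)) :=
  {p | StrictMono p.1 ∧ (∀ t, p.2 (p.1 t) = false) ∧ ExactCopy d H {u | vertexAt p.1 p.2 u ∈ S}}

lemma goodCount_eq_ncard_goodReps (H : Set (Fin d → Bool)) (S : Set (Fin n → Bool)) :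
    goodCount d H n S = (goodReps d H S).ncard := by
  rw [goodCount, ← Nat.card_coe_set_eq]
  refine Nat.card_congr
    { toFun := fun p => ⟨(p.1.1.orderEmbOfFin p.2.1, p.1.2), ?_⟩
      invFun := fun p => ⟨(univ.image p.1.1, p.1.2), ?_⟩
      left_inv := fun p => Subtype.ext (Prod.ext (image_orderEmbOfFin_univ _ _) rfl)
      right_inv := fun p => Subtype.ext (Prod.ext (orderEmbOfFin_image_univ p.2.1 _) rfl) }
  · obtain ⟨⟨F, g⟩, hF, hg, hgood⟩ := p
    refine ⟨(F.orderEmbOfFin hF).strictMono, fun t => hg _ (orderEmbOfFin_mem F hF t), ?_⟩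
    simpa only [IsGood, embed_eq_vertexAt hF hg] using hgood
  · obtain ⟨⟨e, g⟩, he, hg, hgood⟩ := p
    have hcard : (univ.image e).card = d := by
      rw [card_image_of_injective _ he.injective, card_univ, Fintype.card_fin]
    have hg' : ∀ i ∈ univ.image e, g i = false := by
      simp only [mem_image, mem_univ, true_and, forall_exists_index, forall_apply_eq_imp_iff]
      exact hg
    refine ⟨hcard, hg', ?_⟩
    simpa only [IsGood, embed_eq_vertexAt hcard hg', orderEmbOfFin_image_univ he] using hgood

/-! ### Monotonicity of `ex` -/

lemma gFrac_le_exD (H : Set (Fin d → Bool)) (S : Set (Fin n → Bool)) :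
    gFrac d H n S ≤ exD d H n :=
  le_ciSup (Set.finite_range _).bddAbove S

lemma exD_nonneg (H : Set (Fin d → Bool)) (n : ℕ) : 0 ≤ exD d H n :=
  (div_nonneg (Nat.cast_nonneg _) (by positivity)).trans (gFrac_le_exD H ∅)

def facet (j : Fin (n + 1)) (b : Bool) (S : Set (Fin (n + 1) → Bool)) : Set (Fin n → Bool) :=
  {v | j.insertNth b v ∈ S}

lemma vertexAt_succAbove_insertNth (e : Fin d → Fin n) (j : Fin (n + 1)) (b : Bool)
    (g : Fin n → Bool) (u : Fin d → Bool) :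
    vertexAt (j.succAbove ∘ e) (j.insertNth b g) u = j.insertNth b (vertexAt e g u) := by
  funext x
  refine Fin.succAboveCases j ?_ (fun i => ?_) x
  · rw [vertexAt_apply_of_notMem_range _ _ (by simp [Fin.succAbove_ne])]
    simp only [Fin.insertNth_apply_same]
  · simp [vertexAt, Finset.sum_apply, Pi.single_apply]

lemma succAbove_comp_mem_goodReps_iff {H : Set (Fin d → Bool)} {S : Set (Fin (n + 1) → Bool)}
    (j : Fin (n + 1)) (b : Bool) (e : Fin d → Fin n) (g : Fin n → Bool) :
    (j.succAbove ∘ e, j.insertNth b g) ∈ goodReps d H S ↔ (e, g) ∈ goodReps d H (facet j b S) := by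
  simp only [goodReps, Set.mem_ofPred_eq, vertexAt_succAbove_insertNth, facet, Function.comp_apply,
    Fin.insertNth_apply_succAbove]
  refine and_congr_left' ⟨fun h a a' haa' => ?_, fun h => Fin.strictMono_succAbove j |>.comp h⟩
  exact Fin.succAbove_lt_succAbove_iff.1 (h haa')

/-- Double counting: a good sub-`d`-cube of `S` together with a direction `j` it does not flip
is a good sub-`d`-cube of the trace of `S` on one of the two facets `x_j = b`. -/
lemma ncard_goodReps_mul_le (H : Set (Fin d → Bool)) (S : Set (Fin (n + 1) → Bool)) :
    (goodReps d H S).ncard * (n + 1 - d) ≤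
      ∑ jb : Fin (n + 1) × Bool, (goodReps d H (facet jb.1 jb.2 S)).ncard := by
  let lift : (Σ jb : Fin (n + 1) × Bool, goodReps d H (facet jb.1 jb.2 S)) →
      Σ p : goodReps d H S, {j : Fin (n + 1) // j ∉ Set.range p.1.1} :=
    fun ⟨(j, b), ⟨(e, g), h⟩⟩ =>
      ⟨⟨(j.succAbove ∘ e, j.insertNth b g), (succAbove_comp_mem_goodReps_iff j b e g).2 h⟩,
        ⟨j, by simp [Fin.succAbove_ne]⟩⟩
  have hlift : Function.Surjective lift := by
    rintro ⟨⟨⟨e, g⟩, h⟩, ⟨j, hj⟩⟩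
    have : ∀ t, ∃ i, j.succAbove i = e t := fun t =>
      Fin.exists_succAbove_eq fun hjt => hj ⟨t, hjt⟩
    choose e₀ he₀ using this
    obtain rfl : j.succAbove ∘ e₀ = e := funext he₀
    obtain ⟨b, g₀, rfl⟩ : ∃ b g₀, j.insertNth b g₀ = g := ⟨g j, j.removeNth g, by simp⟩
    exact ⟨⟨(j, b), ⟨(e₀, g₀), (succAbove_comp_mem_goodReps_iff j b e₀ g₀).1 h⟩⟩, rfl⟩
  have := Fintype.ofFinite (goodReps d H S)
  have hcard := Nat.card_le_card_of_surjective lift hlift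
  simp only [Nat.card_sigma, Nat.card_coe_set_eq] at hcard
  refine le_of_eq_of_le ?_ hcard
  rw [← Nat.card_coe_set_eq, Nat.card_eq_fintype_card, ← smul_eq_mul, ← card_univ,
    ← sum_const]
  refine sum_congr rfl fun p _ => ?_
  change n + 1 - d = Nat.card ↥(Set.range p.1.1)ᶜ
  rw [Nat.card_coe_set_eq, Set.ncard_compl, Set.ncard_range_of_injective p.2.1.injective,
    Nat.card_eq_fintype_card, Fintype.card_fin, Nat.card_eq_fintype_card, Fintype.card_fin]

lemma succ_sub_mul_choose_mul_two_pow (hd : d ≤ n) :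
    (n + 1 - d) * ((n + 1).choose d * 2 ^ (n + 1 - d)) =
      2 * (n + 1) * (n.choose d * 2 ^ (n - d)) := by
  calc (n + 1 - d) * ((n + 1).choose d * 2 ^ (n + 1 - d))
      = (n + 1).choose d * (n + 1 - d) * 2 ^ (n - d + 1) := by
        rw [show n + 1 - d = n - d + 1 by omega]; ring
    _ = 2 * (n + 1) * (n.choose d * 2 ^ (n - d)) := by rw [← Nat.choose_mul_succ_eq]; ring

lemma two_mul_gFrac_succ_le (hd : d ≤ n) (H : Set (Fin d → Bool))
    (S : Set (Fin (n + 1) → Bool)) :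
    2 * (n + 1) * gFrac d H (n + 1) S ≤
      ∑ jb : Fin (n + 1) × Bool, gFrac d H n (facet jb.1 jb.2 S) := by
  have hcount : ((goodReps d H S).ncard : ℝ) * (n + 1 - d : ℕ) ≤
      ∑ jb : Fin (n + 1) × Bool, ((goodReps d H (facet jb.1 jb.2 S)).ncard : ℝ) := by
    exact_mod_cast ncard_goodReps_mul_le H S
  have hden : ((n + 1 - d : ℕ) : ℝ) * ((n + 1).choose d * 2 ^ (n + 1 - d)) =
      2 * (n + 1) * (n.choose d * 2 ^ (n - d)) := by
    exact_mod_cast succ_sub_mul_choose_mul_two_pow hd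
  simp only [gFrac, goodCount_eq_ncard_goodReps, ← sum_div]
  set c : ℝ := ((goodReps d H S).ncard : ℝ)
  set D : ℝ := (n + 1).choose d * 2 ^ (n + 1 - d)
  set D' : ℝ := n.choose d * 2 ^ (n - d)
  have hD : 0 < D := by
    have := Nat.choose_pos (hd.trans n.le_succ)
    positivity
  have hD' : 0 < D' := by
    have := Nat.choose_pos hd
    positivity
  rw [le_div_iff₀ hD']
  calc 2 * (n + 1) * (c / D) * D' = c * ((n + 1 - d : ℕ) * D / D) := by rw [hden]; ring
    _ = c * (n + 1 - d : ℕ) := by rw [mul_div_cancel_right₀ _ hD.ne']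
    _ ≤ _ := hcount

lemma exD_succ_le (hd : d ≤ n) (H : Set (Fin d → Bool)) : exD d H (n + 1) ≤ exD d H n := by
  refine ciSup_le fun S => le_of_mul_le_mul_left ?_ (by positivity : (0 : ℝ) < 2 * (n + 1))
  calc 2 * (n + 1) * gFrac d H (n + 1) S
      ≤ ∑ jb : Fin (n + 1) × Bool, gFrac d H n (facet jb.1 jb.2 S) := two_mul_gFrac_succ_le hd H S
    _ ≤ ∑ _jb : Fin (n + 1) × Bool, exD d H n := sum_le_sum fun jb _ => gFrac_le_exD H _
    _ = 2 * (n + 1) * exD d H n := by simp [mul_comm]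

lemma tendsto_exD (H : Set (Fin d → Bool)) :
    Tendsto (exD d H) atTop (nhds (⨅ n, exD d H (n + d))) := by
  have hanti : Antitone fun n => exD d H (n + d) :=
    antitone_add_nat_of_succ_le fun n hn => exD_succ_le hn H
  exact (tendsto_add_atTop_iff_nat d).1
    (tendsto_atTop_ciInf hanti ⟨0, by rintro _ ⟨n, rfl⟩; exact exD_nonneg H _⟩)

lemma antitoneOn_exD (H : Set (Fin d → Bool)) : AntitoneOn (exD d H) {n | d ≤ n} :=
  antitoneOn_nat_Ici_of_succ_le fun _ hn => exD_succ_le hn H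

/-! ### Blow-ups -/

/-- The parities of `v` on the `k` blocks `{finProdFinEquiv (j, a) | a}` of `m + 1` coordinates. -/
def blockSum (m : ℕ) : (Fin (k * (m + 1)) → Bool) →+ (Fin k → Bool) where
  toFun v j := ∑ a, v (finProdFinEquiv (j, a))
  map_zero' := by ext; simp
  map_add' v w := by ext; simp [sum_add_distrib]

def blowUp (m : ℕ) (S : Set (Fin k → Bool)) : Set (Fin (k * (m + 1)) → Bool) :=
  {v | blockSum m v ∈ S}

lemma blockSum_single (j : Fin k) (a : Fin (m + 1)) (b : Bool) :
    blockSum m (Pi.single (finProdFinEquiv (j, a)) b) = Pi.single j b := by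
  ext j'
  by_cases h : j' = j <;> simp [blockSum, Pi.single_apply, finProdFinEquiv.injective.eq_iff, h]

def liftFlip (e : Fin d → Fin k) (c : Fin d → Fin (m + 1)) : Fin d → Fin (k * (m + 1)) :=
  fun t => finProdFinEquiv (e t, c t)

noncomputable def liftPos (e : Fin d → Fin k) (c : Fin d → Fin (m + 1)) : Fin k → Fin (m + 1) :=
  Function.extend e c fun _ => Fin.last m

noncomputable def liftBit (e : Fin d → Fin k) (g : Fin k → Bool) (f : Fin k → Fin m → Bool) :
    Fin k → Bool :=
  Function.extend e 0 fun j => g j + ∑ b, f j b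

/-- On block `j = e t` the lifted base point is `f j` with a `0` inserted at the flip position
`c t`; on any other block it is `f j` followed by the bit that makes its parity `g j`. -/
noncomputable def liftBase (e : Fin d → Fin k) (g : Fin k → Bool) (c : Fin d → Fin (m + 1))
    (f : Fin k → Fin m → Bool) : Fin (k * (m + 1)) → Bool :=
  Function.uncurry (fun j => Fin.insertNth (α := fun _ => Bool) (liftPos e c j) (liftBit e g f j)
    (f j)) ∘ finProdFinEquiv.symm

lemma liftBase_apply (e : Fin d → Fin k) (g : Fin k → Bool) (c : Fin d → Fin (m + 1))
    (f : Fin k → Fin m → Bool) (j : Fin k) (a : Fin (m + 1)) :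
    liftBase e g c f (finProdFinEquiv (j, a)) =
      Fin.insertNth (α := fun _ => Bool) (liftPos e c j) (liftBit e g f j) (f j) a := by
  simp [liftBase]

lemma strictMono_liftFlip {e : Fin d → Fin k} (he : StrictMono e) (c : Fin d → Fin (m + 1)) :
    StrictMono (liftFlip e c) := by
  intro t t' htt'
  have hj : (e t : ℕ) + 1 ≤ e t' := he htt'
  have ha := (c t).isLt
  simp only [liftFlip, Fin.lt_def, finProdFinEquiv_apply_val]
  nlinarith

lemma liftBase_liftFlip {e : Fin d → Fin k} (he : Function.Injective e) (g : Fin k → Bool)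
    (c : Fin d → Fin (m + 1)) (f : Fin k → Fin m → Bool) (t : Fin d) :
    liftBase e g c f (liftFlip e c t) = false := by
  rw [liftFlip, liftBase_apply, liftPos, he.extend_apply, Fin.insertNth_apply_same, liftBit,
    he.extend_apply]
  rfl

lemma blockSum_liftBase {e : Fin d → Fin k} (he : Function.Injective e) {g : Fin k → Bool}
    (hg : ∀ t, g (e t) = false) (c : Fin d → Fin (m + 1)) (f : Fin k → Fin m → Bool) :
    blockSum m (liftBase e g c f) = vertexAt e g fun t => ∑ b, f (e t) b := by
  ext j
  simp only [blockSum, AddMonoidHom.coe_mk, ZeroHom.coe_mk, liftBase_apply, Fin.sum_insertNth]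
  by_cases hj : j ∈ Set.range e
  · obtain ⟨t, rfl⟩ := hj
    rw [liftBit, he.extend_apply, vertexAt_apply_self he, hg]
    rfl
  · rw [liftBit, Function.extend_apply' _ _ _ (by simpa using hj),
      vertexAt_apply_of_notMem_range _ _ hj, add_assoc, BooleanRing.add_self, add_zero]

lemma blockSum_vertexAt_liftFlip {e : Fin d → Fin k} (he : Function.Injective e)
    {g : Fin k → Bool} (hg : ∀ t, g (e t) = false) (c : Fin d → Fin (m + 1))
    (f : Fin k → Fin m → Bool) (u : Fin d → Bool) :
    blockSum m (vertexAt (liftFlip e c) (liftBase e g c f) u) =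
      vertexAt e g (u + fun t => ∑ b, f (e t) b) := by
  rw [vertexAt_add, ← blockSum_liftBase he hg c f]
  simp only [vertexAt, map_add, map_sum, liftFlip, blockSum_single]

lemma lift_mem_goodReps_blowUp {H : Set (Fin d → Bool)} {S : Set (Fin k → Bool)}
    {p : (Fin d → Fin k) × (Fin k → Bool)} (hp : p ∈ goodReps d H S) (c : Fin d → Fin (m + 1))
    (f : Fin k → Fin m → Bool) :
    (liftFlip p.1 c, liftBase p.1 p.2 c f) ∈ goodReps d H (blowUp m S) := by
  obtain ⟨he, hg, hgood⟩ := hp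
  refine ⟨strictMono_liftFlip he c, liftBase_liftFlip he.injective _ c f, ?_⟩
  set ρ : Fin d → Bool := fun t => ∑ b, f (p.1 t) b
  have htrace : {u | vertexAt (liftFlip p.1 c) (liftBase p.1 p.2 c f) u ∈ blowUp m S} =
      (· + ρ) '' {w | vertexAt p.1 p.2 w ∈ S} := by
    have hinv : Function.Involutive (· + ρ) := fun w => by
      ext; simp [add_assoc, BooleanRing.add_self]
    rw [hinv.image_eq_preimage_symm]
    ext u
    simp only [blowUp, Set.mem_ofPred_eq, Set.mem_preimage,
      blockSum_vertexAt_liftFlip he.injective hg]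
    rfl
  rw [htrace]
  exact hgood.image_add ρ

lemma eq_of_liftFlip_eq_of_liftBase_eq {e e' : Fin d → Fin k} {g g' : Fin k → Bool}
    {c c' : Fin d → Fin (m + 1)} {f f' : Fin k → Fin m → Bool} (hg : ∀ t, g (e t) = false)
    (hg' : ∀ t, g' (e' t) = false) (hflip : liftFlip e c = liftFlip e' c')
    (hbase : liftBase e g c f = liftBase e' g' c' f') : e = e' ∧ g = g' ∧ c = c' ∧ f = f' := by
  have hec : ∀ t, e t = e' t ∧ c t = c' t := fun t => by
    simpa [Prod.ext_iff] using finProdFinEquiv.injective (congrFun hflip t)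
  obtain rfl : e = e' := funext fun t => (hec t).1
  obtain rfl : c = c' := funext fun t => (hec t).2
  have hblock : ∀ j, liftBit e g f j = liftBit e g' f' j ∧ f j = f' j := fun j =>
    Fin.insertNth_inj.1 <| funext fun a => by
      simpa only [liftBase_apply] using congrFun hbase (finProdFinEquiv (j, a))
  obtain rfl : f = f' := funext fun j => (hblock j).2
  refine ⟨rfl, funext fun j => ?_, rfl, rfl⟩
  by_cases hj : j ∈ Set.range e
  · obtain ⟨t, rfl⟩ := hj
    rw [hg, hg']
  · have hj' : ¬∃ t, e t = j := hj
    simpa [liftBit, Function.extend_apply' _ _ _ hj'] using (hblock j).1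

lemma ncard_goodReps_mul_le_blowUp (H : Set (Fin d → Bool)) (S : Set (Fin k → Bool)) (m : ℕ) :
    (goodReps d H S).ncard * ((m + 1) ^ d * 2 ^ (k * m)) ≤
      (goodReps d H (blowUp m S)).ncard := by
  let lift : goodReps d H S × (Fin d → Fin (m + 1)) × (Fin k → Fin m → Bool) →
      goodReps d H (blowUp m S) := fun q =>
    ⟨(liftFlip q.1.1.1 q.2.1, liftBase q.1.1.1 q.1.1.2 q.2.1 q.2.2),
      lift_mem_goodReps_blowUp q.1.2 q.2.1 q.2.2⟩
  have hlift : Function.Injective lift := by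
    rintro ⟨⟨⟨e, g⟩, hp⟩, c, f⟩ ⟨⟨⟨e', g'⟩, hp'⟩, c', f'⟩ h
    obtain ⟨hflip, hbase⟩ := Prod.ext_iff.1 (Subtype.ext_iff.1 h)
    obtain ⟨rfl, rfl, rfl, rfl⟩ := eq_of_liftFlip_eq_of_liftBase_eq hp.2.1 hp'.2.1 hflip hbase
    rfl
  have := Nat.card_le_card_of_injective lift hlift
  simp only [Nat.card_prod, Nat.card_coe_set_eq, Nat.card_eq_fintype_card (α := _ × _),
    Fintype.card_prod, Fintype.card_fun, Fintype.card_fin, Fintype.card_bool, ← pow_mul] at this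
  rwa [mul_comm k m]

lemma le_gFrac_blowUp (hdk : d ≤ k) (H : Set (Fin d → Bool)) (S : Set (Fin k → Bool)) (m : ℕ) :
    (goodReps d H S).ncard * d.factorial / (k ^ d * 2 ^ (k - d) : ℝ) ≤
      gFrac d H (k * (m + 1)) (blowUp m S) := by
  have hcount : ((goodReps d H S).ncard : ℝ) * ((m + 1) ^ d * 2 ^ (k * m)) ≤
      (goodReps d H (blowUp m S)).ncard := by
    exact_mod_cast ncard_goodReps_mul_le_blowUp H S m
  have hchoose : ((k * (m + 1)).choose d : ℝ) ≤ (k * (m + 1) : ℕ) ^ d / d.factorial :=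
    Nat.choose_le_pow_div d (k * (m + 1))
  have hpow : (2 : ℝ) ^ (k * (m + 1) - d) = 2 ^ (k * m) * 2 ^ (k - d) := by
    rw [← pow_add, mul_add, mul_one, Nat.add_sub_assoc hdk]
  have hk : (0 : ℝ) < k ^ d := by
    rcases Nat.eq_zero_or_pos k with rfl | hk
    · obtain rfl : d = 0 := Nat.le_zero.1 hdk
      simp
    · positivity
  have hC : 0 < (k * (m + 1)).choose d :=
    Nat.choose_pos (hdk.trans (Nat.le_mul_of_pos_right k m.succ_pos))
  rw [gFrac, goodCount_eq_ncard_goodReps, div_le_div_iff₀ (by positivity) (by positivity)]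
  calc ((goodReps d H S).ncard : ℝ) * d.factorial * ((k * (m + 1)).choose d * 2 ^ (k * (m + 1) - d))
      ≤ (goodReps d H S).ncard * d.factorial *
          ((k * (m + 1) : ℕ) ^ d / d.factorial * (2 ^ (k * m) * 2 ^ (k - d))) := by
        rw [hpow]
        gcongr
    _ = (goodReps d H S).ncard * ((m + 1) ^ d * 2 ^ (k * m)) * (k ^ d * 2 ^ (k - d)) := by
        push_cast [mul_pow]
        field_simp
    _ ≤ _ := by gcongr

/-! ### The configuration `W₁₀` -/

def W10 : Set (Fin 3 → Bool) := {![false, false, false], ![false, false, true], ![true, true, true]}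

lemma exactCopy_W10 (x : Fin 3 → Bool) (k : Fin 3) :
    ExactCopy 3 W10 {x, x + Pi.single k 1, x + 1} := by
  refine ⟨Equiv.swap 2 k, x, ?_⟩
  have h0 : autMap 3 (Equiv.swap 2 k) x ![false, false, false] = x := by
    revert x k; decide
  have h1 : autMap 3 (Equiv.swap 2 k) x ![false, false, true] = x + Pi.single k 1 := by
    revert x k; decide
  have h2 : autMap 3 (Equiv.swap 2 k) x ![true, true, true] = x + 1 := by
    revert x k; decide
  simp only [W10, Set.image_insert_eq, Set.image_singleton, h0, h1, h2]

def w10Seed : List (Fin 6 → Bool) :=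
  [![false, false, false, false, false, false], ![false, false, false, false, true, true],
   ![false, false, false, true, true, true], ![false, false, true, false, false, false],
   ![false, false, true, true, false, true], ![false, false, true, true, true, false],
   ![false, true, false, false, false, true], ![false, true, false, true, false, false],
   ![false, true, false, true, true, false], ![false, true, true, false, true, false],
   ![false, true, true, false, true, true], ![false, true, true, true, false, true],
   ![true, false, false, false, true, false], ![true, false, false, true, false, false],
   ![true, false, false, true, false, true], ![true, false, true, false, false, true],
   ![true, false, true, false, true, true], ![true, false, true, true, true, false],
   ![true, true, false, false, false, true], ![true, true, false, false, true, false],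
   ![true, true, false, true, true, true], ![true, true, true, false, false, false],
   ![true, true, true, true, false, false], ![true, true, true, true, true, true]]

lemma le_ncard_goodReps_w10Seed : 120 ≤ (goodReps 3 W10 {v | v ∈ w10Seed}).ncard := by
  let T := ((univ.filter fun e : Fin 3 → Fin 6 => ∀ a b, a < b → e a < e b) ×ˢ
    (univ : Finset (Fin 6 → Bool))).filter fun p => (∀ t, p.2 (p.1 t) = false) ∧
      ∃ x : Fin 3 → Bool, ∃ k : Fin 3, ∀ u, vertexAt p.1 p.2 u ∈ w10Seed ↔
        u = x ∨ u = x + Pi.single k 1 ∨ u = x + 1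
  have hT : T.card = 120 := by decide +kernel
  have hsub : (T : Set _) ⊆ goodReps 3 W10 {v | v ∈ w10Seed} := by
    intro p hp
    simp only [T, coe_filter, mem_product, mem_filter, mem_univ, true_and, and_true] at hp
    obtain ⟨hmono, hg, x, k, hx⟩ := hp
    refine ⟨fun a b h => hmono a b h, hg, ?_⟩
    convert exactCopy_W10 x k using 1
    ext u
    simp [hx u]
  calc 120 = (T : Set _).ncard := by rw [Set.ncard_coe_finset, hT]
    _ ≤ _ := Set.ncard_le_ncard hsub

lemma five_twelfths_le_exD_W10 (m : ℕ) : 5 / 12 ≤ exD 3 W10 (6 * (m + 1)) :=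
  calc (5 : ℝ) / 12 = 120 * (3 : ℕ).factorial / (6 ^ 3 * 2 ^ (6 - 3)) := by norm_num
    _ ≤ (goodReps 3 W10 {v | v ∈ w10Seed}).ncard * (3 : ℕ).factorial / (6 ^ 3 * 2 ^ (6 - 3)) := by
        gcongr
        exact_mod_cast le_ncard_goodReps_w10Seed
    _ ≤ gFrac 3 W10 (6 * (m + 1)) (blowUp m {v | v ∈ w10Seed}) :=
        le_gFrac_blowUp (by norm_num) W10 _ m
    _ ≤ exD 3 W10 (6 * (m + 1)) := gFrac_le_exD W10 _

end CubeDensity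

open CubeDensity

/-- λ(W₁₀, 3) ≥ 5/12, where W₁₀ = {(0,0,0),(0,0,1),(1,1,1)} in Q₃. -/
theorem dCubeDensity_W10_ge :
    ∃ L : ℝ,
      Filter.Tendsto
        (fun n => CubeDensity.exD 3
          ({![false, false, false], ![false, false, true],
            ![true, true, true]} : Set (Fin 3 → Bool)) n)
        Filter.atTop (nhds L) ∧ 5 / 12 ≤ L := by
  refine ⟨_, tendsto_exD W10, ge_of_tendsto (tendsto_exD W10) ?_⟩
  filter_upwards [eventually_ge_atTop 3] with n hn
  calc (5 : ℝ) / 12 ≤ exD 3 W10 (6 * (n + 1)) := five_twelfths_le_exD_W10 n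
    _ ≤ exD 3 W10 n := antitoneOn_exD W10 hn (show 3 ≤ 6 * (n + 1) by omega) (by omega)
end
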